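/- arXiv:1406.6202 — 6 statements merged into one kernel-verified Lean document; each statement's English description precedes it below -/
import Mathlib

section
/- For f ∈ X_c and α, β > 0, the Mellin fractional differences satisfy the semigroup property: (Δ_h^{α,c}(Δ_h^{β,c} f))(x) = (Δ_h^{α+β,c} f)(x) for almost every x > 0 and every h > 0. -/
/-!
For a.e. `x > 0` the double series `∑_{j,k} a_j b_k h^{(j+k)c} f(h^{j+k} x)` behind
`Δ^α (Δ^β f)(x)` converges absolutely: every dilation `x ↦ a^c f(a x)` has the same `X_c` norm
as `f`, and for `α > 0` the coefficients satisfy `|C(α, j)| = O(j^{-1-α})`, so they are absolutely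
summable. Regrouping along `n = j + k`, the Chu–Vandermonde identity
`∑_{j+k=n} C(α, j) C(β, k) = C(α + β, n)` together with
`(-1)^{α-j} (-1)^{β-k} = (-1)^{α+β-n}` produces the coefficients of `Δ^{α+β}`.
-/

open MeasureTheory Set

noncomputable def gbinom (α : ℝ) (j : ℕ) : ℝ :=
  (∏ i ∈ Finset.range j, (α - i)) / (Nat.factorial j)

noncomputable def mellinCoef (α : ℝ) (j : ℕ) : ℂ :=
  (gbinom α j : ℂ) * (-1 : ℂ) ^ ((α : ℂ) - (j : ℂ))

noncomputable def mellinDiff (α c h : ℝ) (f : ℝ → ℂ) (x : ℝ) : ℂ :=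
  ∑' j : ℕ, mellinCoef α j * ((((h : ℝ) ^ j) ^ c : ℝ) : ℂ) * f ((h : ℝ) ^ j * x)

def memXc (c : ℝ) (f : ℝ → ℂ) : Prop :=
  IntegrableOn (fun x : ℝ => x ^ (c - 1) * ‖f x‖) (Set.Ioi 0)

section

open Finset

lemma descPochhammer_smeval_eq_prod_range {R : Type*} [CommRing R] (a : R) (j : ℕ) :
    (descPochhammer ℤ j).smeval a = ∏ i ∈ range j, (a - i) := by
  rw [← Polynomial.aeval_eq_smeval, Polynomial.aeval_def, ← Polynomial.eval_map,
    descPochhammer_map, descPochhammer_eval_eq_prod_range]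

lemma gbinom_eq_choose (α : ℝ) (j : ℕ) : gbinom α j = Ring.choose α j := by
  rw [Ring.choose_eq_smul, smul_eq_mul, descPochhammer_smeval_eq_prod_range, gbinom,
    div_eq_inv_mul]

lemma sum_antidiagonal_gbinom_mul (α β : ℝ) (n : ℕ) :
    ∑ p ∈ antidiagonal n, gbinom α p.1 * gbinom β p.2 = gbinom (α + β) n := by
  simp only [gbinom_eq_choose]
  exact (Ring.add_choose_eq n (Commute.all α β)).symm

lemma gbinom_succ (α : ℝ) (j : ℕ) : gbinom α (j + 1) = gbinom α j * (α - j) / (j + 1) := by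
  rw [gbinom, gbinom, prod_range_succ, Nat.factorial_succ]
  push_cast
  field_simp

lemma abs_gbinom_succ {α : ℝ} {m : ℕ} (hm : α ≤ m) :
    |gbinom α (m + 1)| = |gbinom α m| * ((m - α) / (m + 1)) := by
  rw [gbinom_succ, mul_div_assoc, abs_mul, abs_div, abs_of_nonpos (sub_nonpos.2 hm), neg_sub,
    abs_of_pos (by positivity : (0 : ℝ) < m + 1)]

lemma sub_div_add_one_le_rpow {α m : ℝ} (hα : 0 ≤ α) (hm : 0 ≤ m) :
    (m - α) / (m + 1) ≤ (m / (m + 1)) ^ (1 + α) := by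
  have hm1 : 0 < m + 1 := by linarith
  have hs : -1 ≤ -(m + 1)⁻¹ := neg_le_neg (inv_le_one_of_one_le₀ (by linarith))
  have hbern := one_add_mul_self_le_rpow_one_add hs (by linarith : 1 ≤ 1 + α)
  have hlhs : 1 + (1 + α) * -(m + 1)⁻¹ = (m - α) / (m + 1) := by field_simp; ring
  have hbase : 1 + -(m + 1)⁻¹ = m / (m + 1) := by field_simp; ring
  rwa [hlhs, hbase] at hbern

lemma abs_gbinom_succ_mul_rpow_le {α : ℝ} (hα : 0 ≤ α) {m : ℕ} (hm : α ≤ m) :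
    |gbinom α (m + 1)| * ((m + 1 : ℕ) : ℝ) ^ (1 + α) ≤ |gbinom α m| * (m : ℝ) ^ (1 + α) := by
  have hm1 : (0 : ℝ) < m + 1 := by positivity
  calc |gbinom α (m + 1)| * ((m + 1 : ℕ) : ℝ) ^ (1 + α)
      = |gbinom α m| * ((m - α) / (m + 1)) * ((m : ℝ) + 1) ^ (1 + α) := by
        rw [abs_gbinom_succ hm]; push_cast; rfl
    _ ≤ |gbinom α m| * ((m / (m + 1)) ^ (1 + α)) * ((m : ℝ) + 1) ^ (1 + α) := by
        gcongr
        exact sub_div_add_one_le_rpow hα m.cast_nonneg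
    _ = |gbinom α m| * (m : ℝ) ^ (1 + α) := by
        rw [Real.div_rpow m.cast_nonneg hm1.le, mul_assoc,
          div_mul_cancel₀ _ (Real.rpow_pos_of_pos hm1 _).ne']

-- `|gbinom α m| * m ^ (1 + α)` is nonincreasing for `m ≥ α`, so `gbinom α m = O(m ^ (-(1 + α)))`.
lemma summable_abs_gbinom {α : ℝ} (hα : 0 < α) : Summable fun j => |gbinom α j| := by
  obtain ⟨M, hM⟩ := exists_nat_ge α
  set C := |gbinom α M| * (M : ℝ) ^ (1 + α)
  have hbound : ∀ m ≥ M, |gbinom α m| * (m : ℝ) ^ (1 + α) ≤ C := by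
    intro m hm
    induction m, hm using Nat.le_induction with
    | base => rfl
    | succ m hm ih =>
      exact (abs_gbinom_succ_mul_rpow_le hα.le (hM.trans (Nat.cast_le.2 hm))).trans ih
  refine Summable.of_norm_bounded_eventually_nat
    ((Real.summable_nat_rpow.2 (by linarith : -(1 + α) < -1)).mul_left C) ?_
  filter_upwards [Filter.eventually_ge_atTop (max M 1)] with m hm
  have hm0 : (0 : ℝ) < m := by exact_mod_cast (le_max_right M 1).trans hm
  rw [Real.norm_eq_abs, abs_abs, Real.rpow_neg hm0.le, ← div_eq_mul_inv,
    le_div_iff₀ (Real.rpow_pos_of_pos hm0 _)]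
  exact hbound m ((le_max_left M 1).trans hm)

lemma norm_mellinCoef (α : ℝ) (j : ℕ) : ‖mellinCoef α j‖ = |gbinom α j| := by
  rw [mellinCoef, norm_mul, Complex.norm_real, Real.norm_eq_abs,
    Complex.norm_cpow_of_ne_zero (by norm_num : (-1 : ℂ) ≠ 0)]
  simp

lemma summable_norm_mellinCoef {α : ℝ} (hα : 0 < α) : Summable fun j => ‖mellinCoef α j‖ := by
  simpa only [norm_mellinCoef] using summable_abs_gbinom hα

lemma sum_antidiagonal_mellinCoef_mul (α β : ℝ) (n : ℕ) :
    ∑ p ∈ antidiagonal n, mellinCoef α p.1 * mellinCoef β p.2 = mellinCoef (α + β) n := by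
  have hsign : ∀ p ∈ antidiagonal n, mellinCoef α p.1 * mellinCoef β p.2 =
      (gbinom α p.1 * gbinom β p.2 : ℝ) * (-1 : ℂ) ^ (((α + β : ℝ) : ℂ) - (n : ℂ)) := by
    rintro ⟨j, k⟩ hjk
    rw [mellinCoef, mellinCoef, mul_mul_mul_comm, Complex.ofReal_mul,
      ← Complex.cpow_add _ _ (by norm_num : (-1 : ℂ) ≠ 0),
      ← HasAntidiagonal.mem_antidiagonal.mp hjk]
    congr 2
    push_cast
    ring
  rw [sum_congr rfl hsign, ← sum_mul, ← Complex.ofReal_sum, sum_antidiagonal_gbinom_mul,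
    mellinCoef]

theorem Summable.tsum_eq_tsum_sum_antidiagonal {A E : Type*} [AddCommMonoid A]
    [HasAntidiagonal A] [AddCommGroup E] [UniformSpace E] [IsUniformAddGroup E]
    [CompleteSpace E] [T0Space E]
    {f : A × A → E} (hf : Summable f) :
    ∑' p, f p = ∑' n, ∑ p ∈ antidiagonal n, f p := by
  rw [← HasAntidiagonal.sigmaAntidiagonalEquivProd.tsum_eq]
  refine (HasAntidiagonal.sigmaAntidiagonalEquivProd.summable_iff.2 hf).tsum_sigma.trans
    (tsum_congr fun n => ?_)
  rw [tsum_fintype, ← sum_coe_sort (antidiagonal n)]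
  rfl

theorem tsum_mul_tsum_mul_add_eq_tsum_sum_antidiagonal {𝕜 : Type*} [NormedField 𝕜]
    [CompleteSpace 𝕜] {a b g : ℕ → 𝕜}
    (hs : Summable fun p : ℕ × ℕ => a p.1 * (b p.2 * g (p.1 + p.2))) :
    ∑' j, a j * ∑' k, b k * g (j + k) = ∑' n, (∑ p ∈ antidiagonal n, a p.1 * b p.2) * g n := by
  calc ∑' j, a j * ∑' k, b k * g (j + k)
      = ∑' p : ℕ × ℕ, a p.1 * (b p.2 * g (p.1 + p.2)) := by
        simp_rw [← tsum_mul_left]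
        exact hs.tsum_prod.symm
    _ = ∑' n, ∑ p ∈ antidiagonal n, a p.1 * (b p.2 * g (p.1 + p.2)) :=
        hs.tsum_eq_tsum_sum_antidiagonal
    _ = ∑' n, (∑ p ∈ antidiagonal n, a p.1 * b p.2) * g n := by
        refine tsum_congr fun n => ?_
        rw [sum_mul]
        refine sum_congr rfl fun p hp => ?_
        rw [HasAntidiagonal.mem_antidiagonal.mp hp, mul_assoc]

end

open scoped ENNReal

lemma lintegral_Ioi_comp_mul_left {a : ℝ} (ha : 0 < a) {g : ℝ → ℝ≥0∞} (hg : Measurable g) :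
    ∫⁻ x in Ioi 0, g (a * x) = ENNReal.ofReal a⁻¹ * ∫⁻ y in Ioi 0, g y := by
  have hpre : (a * ·) ⁻¹' Ioi 0 = Ioi 0 := by
    ext x
    exact mul_pos_iff_of_pos_left ha
  rw [← hpre, ← lintegral_map hg (measurable_const_mul a),
    ← Measure.restrict_map (measurable_const_mul a) measurableSet_Ioi, hpre,
    Real.map_volume_mul_left ha.ne', Measure.restrict_smul, lintegral_smul_measure,
    abs_of_pos (inv_pos.2 ha), smul_eq_mul]

-- `memXc c f` says that `f` is integrable for this measure.
noncomputable def mellinMeasure (c : ℝ) : Measure ℝ :=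
  (volume.restrict (Ioi 0)).withDensity fun x => ENNReal.ofReal (x ^ (c - 1))

lemma lintegral_mellinMeasure (c : ℝ) {g : ℝ → ℝ≥0∞} (hg : Measurable g) :
    ∫⁻ x, g x ∂mellinMeasure c = ∫⁻ x in Ioi 0, ENNReal.ofReal (x ^ (c - 1)) * g x :=
  lintegral_withDensity_eq_lintegral_mul _ (by fun_prop) hg

lemma ae_restrict_Ioi_of_ae_mellinMeasure {c : ℝ} {p : ℝ → Prop}
    (h : ∀ᵐ x ∂mellinMeasure c, p x) : ∀ᵐ x ∂volume.restrict (Ioi 0), p x := by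
  rw [mellinMeasure, ae_withDensity_iff (by fun_prop)] at h
  filter_upwards [h, ae_restrict_mem measurableSet_Ioi] with x hpx hx
  exact hpx (ENNReal.ofReal_pos.2 (Real.rpow_pos_of_pos hx _)).ne'

lemma lintegral_enorm_mellinMeasure_lt_top {c : ℝ} {f : ℝ → ℂ} (hmeas : Measurable f)
    (hf : memXc c f) : ∫⁻ x, ‖f x‖ₑ ∂mellinMeasure c < ∞ := by
  rw [lintegral_mellinMeasure c hmeas.enorm]
  refine lt_of_le_of_lt (lintegral_mono fun x => ?_) hf.2
  rw [enorm_mul, enorm_norm]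
  gcongr
  exact Real.ofReal_le_enorm _

lemma lintegral_mellinMeasure_comp_mul_left (c : ℝ) {a : ℝ} (ha : 0 < a) {g : ℝ → ℝ≥0∞}
    (hg : Measurable g) :
    ∫⁻ x, ENNReal.ofReal (a ^ c) * g (a * x) ∂mellinMeasure c = ∫⁻ x, g x ∂mellinMeasure c := by
  have hweight : ∀ x ∈ Ioi (0 : ℝ),
      ENNReal.ofReal (x ^ (c - 1)) * (ENNReal.ofReal (a ^ c) * g (a * x)) =
        ENNReal.ofReal a * (ENNReal.ofReal ((a * x) ^ (c - 1)) * g (a * x)) := by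
    intro x (hx : 0 < x)
    have hpow : x ^ (c - 1) * a ^ c = a * (a * x) ^ (c - 1) := by
      rw [Real.mul_rpow ha.le hx.le, Real.rpow_sub_one ha.ne']
      field_simp
    rw [← mul_assoc, ← mul_assoc, ← ENNReal.ofReal_mul (Real.rpow_pos_of_pos hx _).le,
      ← ENNReal.ofReal_mul ha.le, hpow]
  rw [lintegral_mellinMeasure c (by fun_prop), lintegral_mellinMeasure c hg,
    setLIntegral_congr_fun measurableSet_Ioi hweight, lintegral_const_mul _ (by fun_prop),
    lintegral_Ioi_comp_mul_left ha (g := fun y => ENNReal.ofReal (y ^ (c - 1)) * g y)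
      (by fun_prop), ← mul_assoc, ← ENNReal.ofReal_mul ha.le,
    mul_inv_cancel₀ ha.ne', ENNReal.ofReal_one, one_mul]

lemma ae_summable_norm_mul_dilation {ι : Type*} [Countable ι] {c : ℝ} {f : ℝ → ℂ}
    (hmeas : Measurable f) (hf : memXc c f) {w : ι → ℂ} (hw : Summable fun i => ‖w i‖)
    {s : ι → ℝ} (hs : ∀ i, 0 < s i) :
    ∀ᵐ x ∂mellinMeasure c, Summable fun i => ‖w i * ((s i ^ c : ℝ) : ℂ) * f (s i * x)‖ := by
  refine summable_norm_of_tsum_eLpNorm_ne_top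
    (f := fun i x => w i * ((s i ^ c : ℝ) : ℂ) * f (s i * x)) le_rfl
    (fun i => ((hmeas.comp (measurable_const_mul (s i))).const_mul _).aestronglyMeasurable) ?_
  have hterm : ∀ i,
      eLpNorm (fun x => w i * ((s i ^ c : ℝ) : ℂ) * f (s i * x)) 1 (mellinMeasure c) =
        ‖w i‖ₑ * ∫⁻ x, ‖f x‖ₑ ∂mellinMeasure c := by
    intro i
    have hscale : ‖((s i ^ c : ℝ) : ℂ)‖ₑ = ENNReal.ofReal (s i ^ c) := by
      rw [← ofReal_norm, Complex.norm_real, Real.norm_of_nonneg (Real.rpow_nonneg (hs i).le c)]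
    simp_rw [eLpNorm_one_eq_lintegral_enorm, enorm_mul, hscale, mul_assoc]
    rw [lintegral_const_mul _ (by fun_prop),
      lintegral_mellinMeasure_comp_mul_left c (hs i) hmeas.enorm]
  rw [tsum_congr hterm, ENNReal.tsum_mul_right]
  exact ENNReal.mul_ne_top (tsum_enorm_ne_top_iff_summable_norm.2 hw)
    (lintegral_enorm_mellinMeasure_lt_top hmeas hf).ne

/-- Semigroup property of Mellin fractional differences:
Δ_h^{α,c}(Δ_h^{β,c} f) = Δ_h^{α+β,c} f a.e. for every h > 0. -/
theorem stmt2 (α β c : ℝ) (hα : 0 < α) (hβ : 0 < β) (f : ℝ → ℂ)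
    (hmeas : Measurable f) (hf : memXc c f) :
    ∀ h : ℝ, 0 < h →
      ∀ᵐ x ∂(volume.restrict (Set.Ioi (0 : ℝ))),
        mellinDiff α c h (mellinDiff β c h f) x = mellinDiff (α + β) c h f x := by
  intro h hh
  have hsum := ae_summable_norm_mul_dilation hmeas hf
    ((summable_norm_mellinCoef hα).mul_norm (summable_norm_mellinCoef hβ))
    (fun p : ℕ × ℕ => pow_pos hh (p.1 + p.2))
  filter_upwards [ae_restrict_Ioi_of_ae_mellinMeasure hsum] with x hx
  set g : ℕ → ℂ := fun n => (((h ^ n) ^ c : ℝ) : ℂ) * f (h ^ n * x)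
  have hshift : ∀ j, (((h ^ j) ^ c : ℝ) : ℂ) * mellinDiff β c h f (h ^ j * x) =
      ∑' k, mellinCoef β k * g (j + k) := by
    intro j
    rw [mellinDiff, ← tsum_mul_left]
    refine tsum_congr fun k => ?_
    simp only [g, pow_add, Real.mul_rpow (pow_pos hh j).le (pow_pos hh k).le, mul_assoc,
      mul_left_comm (h ^ k)]
    push_cast
    ring
  calc mellinDiff α c h (mellinDiff β c h f) x
      = ∑' j, mellinCoef α j * ∑' k, mellinCoef β k * g (j + k) := by
        rw [mellinDiff]
        exact tsum_congr fun j => by rw [mul_assoc, hshift]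
    _ = ∑' n, (∑ p ∈ Finset.HasAntidiagonal.antidiagonal n,
          mellinCoef α p.1 * mellinCoef β p.2) * g n :=
        tsum_mul_tsum_mul_add_eq_tsum_sum_antidiagonal
          (hx.of_norm.congr fun p => by simp only [g, mul_assoc])
    _ = mellinDiff (α + β) c h f x := by
        simp only [sum_antidiagonal_mellinCoef_mul, mellinDiff, g, mul_assoc]
end

section
/- Let α > 1 and c ∈ ℝ. If f belongs to the domain of the Hadamard-type fractional integral J^α_{0+,c} (i.e. ∫_0^x u^{c-1} (log(x/u))^{α-1} |f(u)| du < ∞ for a.e. x > 0), then f ∈ X_{c,loc}, i.e. x^{c-1} f(x) is integrable near 0. -/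
/-! On `(0, a)` with `a < x` the weight `log (x / u) ^ (α - 1)` is bounded below by the positive
constant `log (x / a) ^ (α - 1)`, so finiteness of the Hadamard integral at a single point `x > a`
already bounds `∫₀ᵃ u ^ (c - 1) ‖f u‖ du`; such points exist since the domain condition holds
almost everywhere on `(0, ∞)`. -/

open MeasureTheory Set

/-- f ∈ Dom J^α_{0+,c}: ∫_0^x u^{c-1}(log(x/u))^{α-1}|f(u)| du < ∞ for a.e. x > 0 -/
def memDomJ (α c : ℝ) (f : ℝ → ℂ) : Prop :=
  ∀ᵐ x ∂(volume.restrict (Set.Ioi (0 : ℝ))),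
    (∫⁻ u in Set.Ioo (0 : ℝ) x,
      ENNReal.ofReal (u ^ (c - 1) * Real.log (x / u) ^ (α - 1) * ‖f u‖)) < ⊤

/-- f ∈ X_{c,loc} -/
def memXloc (c : ℝ) (f : ℝ → ℂ) : Prop :=
  ∀ a : ℝ, 0 < a →
    IntegrableOn (fun x : ℝ => x ^ (c - 1) * ‖f x‖) (Set.Ioo 0 a)

theorem exists_gt_of_ae_restrict_Ioi {p : ℝ → Prop} {a b : ℝ}
    (h : ∀ᵐ x ∂volume.restrict (Ioi b), p x) (hba : b ≤ a) : ∃ x, a < x ∧ p x := by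
  have h' : ∀ᵐ x ∂volume.restrict (Ioi a), p x :=
    ae_restrict_of_ae_restrict_of_subset (Ioi_subset_Ioi hba) h
  have : (ae (volume.restrict (Ioi a))).NeBot := ae_restrict_neBot.2 (by simp)
  obtain ⟨x, hpx, hax⟩ := (h'.and (ae_restrict_mem measurableSet_Ioi)).exists
  exact ⟨x, hax, hpx⟩

theorem setLIntegral_lt_top_of_const_mul_le {α : Type*} [MeasurableSpace α] {μ : Measure α}
    {s t : Set α} {F G : α → ENNReal} {m : ENNReal} (hs : MeasurableSet s) (hst : s ⊆ t)
    (hm : m ≠ 0) (hle : ∀ u ∈ s, m * F u ≤ G u) (hG : ∫⁻ u in t, G u ∂μ < ⊤) :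
    ∫⁻ u in s, F u ∂μ < ⊤ := by
  refine ENNReal.lt_top_of_mul_ne_top_right (ne_top_of_le_ne_top hG.ne ?_) hm
  calc m * ∫⁻ u in s, F u ∂μ
      ≤ ∫⁻ u in s, m * F u ∂μ := lintegral_const_mul_le _ _
    _ ≤ ∫⁻ u in s, G u ∂μ := setLIntegral_mono' hs hle
    _ ≤ ∫⁻ u in t, G u ∂μ := lintegral_mono_set hst

theorem Real.rpow_log_div_le_rpow_log_div {x a u β : ℝ} (hu : 0 < u) (hua : u ≤ a) (hax : a ≤ x)
    (hβ : 0 ≤ β) : Real.log (x / a) ^ β ≤ Real.log (x / u) ^ β := by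
  have ha : 0 < a := hu.trans_le hua
  refine Real.rpow_le_rpow (Real.log_nonneg ((one_le_div ha).2 hax)) ?_ hβ
  exact Real.log_le_log (div_pos (ha.trans_le hax) ha)
    (div_le_div_of_nonneg_left (ha.trans_le hax).le hu hua)

theorem stmt5 (α c : ℝ) (hα : 1 < α) (f : ℝ → ℂ) (hmeas : Measurable f)
    (hdom : memDomJ α c f) : memXloc c f := by
  intro a ha
  obtain ⟨x, hax, hx⟩ := exists_gt_of_ae_restrict_Ioi hdom ha.le
  have hm : 0 < Real.log (x / a) ^ (α - 1) :=
    Real.rpow_pos_of_pos (Real.log_pos ((one_lt_div ha).2 hax)) _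
  have hnonneg : ∀ u ∈ Ioo (0 : ℝ) a, 0 ≤ u ^ (c - 1) * ‖f u‖ := fun u hu =>
    mul_nonneg (Real.rpow_nonneg hu.1.le _) (norm_nonneg _)
  refine ⟨((measurable_id.pow_const _).mul hmeas.norm).aestronglyMeasurable, ?_⟩
  rw [hasFiniteIntegral_iff_ofReal ((ae_restrict_mem measurableSet_Ioo).mono hnonneg)]
  refine setLIntegral_lt_top_of_const_mul_le measurableSet_Ioo (Ioo_subset_Ioo_right hax.le)
    (ENNReal.ofReal_pos.2 hm).ne' (fun u hu => ?_) hx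
  rw [← ENNReal.ofReal_mul hm.le, mul_left_comm, ← mul_assoc]
  gcongr ENNReal.ofReal (_ * ?_ * _)
  · exact Real.rpow_nonneg hu.1.le _
  · exact Real.rpow_log_div_le_rpow_log_div hu.1 hu.2.le hax.le (by linarith)
end

section
/- Let 0 < α ≤ 1 and c ∈ ℝ. Then every f ∈ X_{c,loc} belongs to the domain of the Hadamard-type fractional integral J^α_{0+,c}, i.e. ∫_0^x u^{c-1}(log(x/u))^{α-1}|f(u)| du < ∞ for a.e. x > 0. -/
/-!
For `0 < u < x ≤ a` we have `log (x / u) ≥ 1 - u / x ≥ (x - u) / a`, so for `α ≤ 1` the Hadamard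
kernel `log (x / u) ^ (α - 1)` is dominated by the Riemann–Liouville kernel
`a ^ (1 - α) (x - u) ^ (α - 1)`, whose integral over `x ∈ (u, a)` is at most `a ^ α / α`.
By Tonelli, the Hadamard integral of `ψ u = u ^ (c - 1) |f u|`, integrated over `x ∈ (0, a)`, is at
most `(a / α) ∫₀^a ψ < ∞`; hence it is finite for almost every `x < a`, and `a` is arbitrary.
-/
open MeasureTheory Set

open Function
open scoped ENNReal

lemma rpow_log_div_le {α u x a : ℝ} (hα1 : α ≤ 1) (hu : 0 < u) (hux : u < x) (hxa : x ≤ a) :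
    Real.log (x / u) ^ (α - 1) ≤ a ^ (1 - α) * (x - u) ^ (α - 1) := by
  have hx : 0 < x := hu.trans hux
  have ha : 0 < a := hx.trans_le hxa
  have hlog : (x - u) / a ≤ Real.log (x / u) := calc
    (x - u) / a ≤ (x - u) / x := by gcongr
    _ = 1 - (x / u)⁻¹ := by field_simp
    _ ≤ Real.log (x / u) := Real.one_sub_inv_le_log_of_pos (by positivity)
  have hpow : a ^ (1 - α) = (a ^ (α - 1))⁻¹ := by rw [← Real.rpow_neg ha.le, neg_sub]
  calc Real.log (x / u) ^ (α - 1) ≤ ((x - u) / a) ^ (α - 1) :=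
        Real.rpow_le_rpow_of_nonpos (div_pos (by linarith) ha) hlog (by linarith)
    _ = a ^ (1 - α) * (x - u) ^ (α - 1) := by
        rw [Real.div_rpow (by linarith) ha.le, hpow, div_eq_inv_mul]

lemma lintegral_Ioo_rpow_sub {α u a : ℝ} (hα0 : 0 < α) (hua : u ≤ a) :
    ∫⁻ x in Ioo u a, ENNReal.ofReal ((x - u) ^ (α - 1)) = ENNReal.ofReal ((a - u) ^ α / α) := by
  have hint : IntervalIntegrable (fun x => (x - u) ^ (α - 1)) volume u a := by
    simpa using (intervalIntegral.intervalIntegrable_rpow' (a := 0) (b := a - u)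
      (by linarith : -1 < α - 1)).comp_sub_right u
  have hval : ∫ x in u..a, (x - u) ^ (α - 1) = (a - u) ^ α / α := by
    rw [intervalIntegral.integral_comp_sub_right (fun x => x ^ (α - 1)),
      integral_rpow (Or.inl (by linarith))]
    simp [Real.zero_rpow hα0.ne']
  rw [← hval, intervalIntegral.integral_of_le hua,
    ofReal_integral_eq_lintegral_ofReal hint.1 ?_, Measure.restrict_congr_set Ioo_ae_eq_Ioc]
  filter_upwards [self_mem_ae_restrict measurableSet_Ioc] with x hx
  exact Real.rpow_nonneg (by linarith [hx.1]) _

noncomputable def hadamardKernel (α x u : ℝ) : ℝ≥0∞ :=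
  (Iio x).indicator (fun u => ENNReal.ofReal (Real.log (x / u) ^ (α - 1))) u

theorem measurable_hadamardKernel (α : ℝ) : Measurable (uncurry (hadamardKernel α)) := by
  unfold hadamardKernel
  simp only [indicator, mem_Iio]
  exact Measurable.ite (measurableSet_lt measurable_snd measurable_fst) (by fun_prop)
    measurable_const

lemma setLIntegral_Ioo_mul_hadamardKernel {α x a : ℝ} (hxa : x ≤ a) (ψ : ℝ → ℝ≥0∞) :
    ∫⁻ u in Ioo 0 a, ψ u * hadamardKernel α x u =
      ∫⁻ u in Ioo 0 x, ψ u * ENNReal.ofReal (Real.log (x / u) ^ (α - 1)) := by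
  simp only [hadamardKernel, ← indicator_mul_right]
  rw [lintegral_indicator measurableSet_Iio, Measure.restrict_restrict measurableSet_Iio,
    Iio_inter_Ioo, min_eq_left hxa]

lemma lintegral_hadamardKernel_le {α u a : ℝ} (hα0 : 0 < α) (hα1 : α ≤ 1) (hu : 0 < u)
    (hua : u ≤ a) : ∫⁻ x in Ioo 0 a, hadamardKernel α x u ≤ ENNReal.ofReal (a / α) := by
  have ha : 0 < a := hu.trans_le hua
  have hsection : (fun x => hadamardKernel α x u) =
      (Ioi u).indicator fun x => ENNReal.ofReal (Real.log (x / u) ^ (α - 1)) := by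
    ext x
    simp [hadamardKernel, indicator_apply]
  have hinter : Ioi u ∩ Ioo 0 a = Ioo u a := by
    ext x
    simp only [mem_inter_iff, mem_Ioi, mem_Ioo]
    grind
  calc ∫⁻ x in Ioo 0 a, hadamardKernel α x u
      = ∫⁻ x in Ioo u a, ENNReal.ofReal (Real.log (x / u) ^ (α - 1)) := by
        rw [hsection, lintegral_indicator measurableSet_Ioi,
          Measure.restrict_restrict measurableSet_Ioi, hinter]
    _ ≤ ∫⁻ x in Ioo u a, ENNReal.ofReal (a ^ (1 - α)) * ENNReal.ofReal ((x - u) ^ (α - 1)) :=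
        setLIntegral_mono' measurableSet_Ioo fun x hx => by
          rw [← ENNReal.ofReal_mul (by positivity)]
          exact ENNReal.ofReal_le_ofReal (rpow_log_div_le hα1 hu hx.1 hx.2.le)
    _ = ENNReal.ofReal (a ^ (1 - α) * ((a - u) ^ α / α)) := by
        rw [lintegral_const_mul' _ _ ENNReal.ofReal_ne_top, lintegral_Ioo_rpow_sub hα0 hua,
          ENNReal.ofReal_mul (by positivity)]
    _ ≤ ENNReal.ofReal (a / α) := by
        refine ENNReal.ofReal_le_ofReal ?_
        calc a ^ (1 - α) * ((a - u) ^ α / α) ≤ a ^ (1 - α) * (a ^ α / α) := by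
              gcongr
              linarith
          _ = a / α := by rw [mul_div_assoc', ← Real.rpow_add ha, sub_add_cancel, Real.rpow_one]

section

variable {α a : ℝ} {ψ : ℝ → ℝ≥0∞}

lemma aemeasurable_mul_hadamardKernel (hψ : AEMeasurable ψ (volume.restrict (Ioo 0 a))) :
    AEMeasurable (uncurry fun x u => ψ u * hadamardKernel α x u)
      ((volume.restrict (Ioo 0 a)).prod (volume.restrict (Ioo 0 a))) :=
  hψ.comp_snd.mul (measurable_hadamardKernel α).aemeasurable

lemma lintegral_lintegral_mul_hadamardKernel_le (hα0 : 0 < α) (hα1 : α ≤ 1)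
    (hψ : AEMeasurable ψ (volume.restrict (Ioo 0 a))) :
    ∫⁻ x in Ioo 0 a, ∫⁻ u in Ioo 0 a, ψ u * hadamardKernel α x u ≤
      ENNReal.ofReal (a / α) * ∫⁻ u in Ioo 0 a, ψ u := by
  rw [lintegral_lintegral_swap (aemeasurable_mul_hadamardKernel hψ), mul_comm,
    ← lintegral_mul_const' _ _ ENNReal.ofReal_ne_top]
  refine setLIntegral_mono' measurableSet_Ioo fun u hu => ?_
  rw [lintegral_const_mul _ (measurable_hadamardKernel α).of_uncurry_right]
  gcongr
  exact lintegral_hadamardKernel_le hα0 hα1 hu.1 hu.2.le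

lemma ae_lintegral_mul_hadamardKernel_lt_top (hα0 : 0 < α) (hα1 : α ≤ 1)
    (hψ : AEMeasurable ψ (volume.restrict (Ioo 0 a))) (hψfin : ∫⁻ u in Ioo 0 a, ψ u ≠ ⊤) :
    ∀ᵐ x ∂volume.restrict (Ioo 0 a), ∫⁻ u in Ioo 0 a, ψ u * hadamardKernel α x u < ⊤ :=
  ae_lt_top' (aemeasurable_mul_hadamardKernel hψ).lintegral_prod_right' <|
    ne_top_of_le_ne_top (ENNReal.mul_ne_top ENNReal.ofReal_ne_top hψfin)
      (lintegral_lintegral_mul_hadamardKernel_le hα0 hα1 hψ)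

end

lemma ae_restrict_Ioi_of_forall_Ioo {p : ℝ → Prop}
    (h : ∀ a, 0 < a → ∀ᵐ x ∂volume.restrict (Ioo 0 a), p x) :
    ∀ᵐ x ∂volume.restrict (Ioi 0), p x := by
  have hIoi : Ioi (0 : ℝ) = ⋃ n : ℕ, Ioo 0 ((n : ℝ) + 1) := by
    ext x
    simp only [mem_Ioi, mem_iUnion, mem_Ioo]
    exact ⟨fun hx => (exists_nat_gt x).imp fun n hn => ⟨hx, by linarith⟩, fun ⟨_, hx, _⟩ => hx⟩
  rw [hIoi, ae_restrict_iUnion_iff]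
  exact fun n => h _ n.cast_add_one_pos

theorem ae_lintegral_mul_rpow_log_div_lt_top {α : ℝ} (hα0 : 0 < α) (hα1 : α ≤ 1)
    {ψ : ℝ → ℝ≥0∞} (hψ : ∀ a, 0 < a → AEMeasurable ψ (volume.restrict (Ioo 0 a)))
    (hψfin : ∀ a, 0 < a → ∫⁻ u in Ioo 0 a, ψ u ≠ ⊤) :
    ∀ᵐ x ∂volume.restrict (Ioi 0),
      ∫⁻ u in Ioo 0 x, ψ u * ENNReal.ofReal (Real.log (x / u) ^ (α - 1)) < ⊤ := by
  refine ae_restrict_Ioi_of_forall_Ioo fun a ha => ?_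
  filter_upwards [ae_lintegral_mul_hadamardKernel_lt_top hα0 hα1 (hψ a ha) (hψfin a ha),
    self_mem_ae_restrict measurableSet_Ioo] with x hx hxa
  rwa [← setLIntegral_Ioo_mul_hadamardKernel hxa.2.le]

theorem stmt8_general (α c : ℝ) (hα0 : 0 < α) (hα1 : α ≤ 1) (f : ℝ → ℂ)
    (hf : memXloc c f) : memDomJ α c f := by
  filter_upwards [ae_lintegral_mul_rpow_log_div_lt_top hα0 hα1
    (ψ := fun u => ENNReal.ofReal (u ^ (c - 1) * ‖f u‖))
    (fun a ha => (hf a ha).aemeasurable.ennreal_ofReal)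
    (fun a ha => (hf a ha).lintegral_lt_top.ne)] with x hx
  refine lt_of_eq_of_lt (setLIntegral_congr_fun measurableSet_Ioo fun u hu => ?_) hx
  rw [← ENNReal.ofReal_mul (by have := hu.1; positivity), mul_right_comm]

/-- For 0 < α ≤ 1, X_{c,loc} ⊂ Dom J^α_{0+,c}. -/
theorem stmt8 (α c : ℝ) (hα0 : 0 < α) (hα1 : α ≤ 1) (f : ℝ → ℂ)
    (hmeas : Measurable f) (hf : memXloc c f) : memDomJ α c f :=
  stmt8_general α c hα0 hα1 f hf
end

section
/- Let c ∈ ℝ and β > 1. The function f(x) = x^{-c} |log x|^{-β} · χ_{(0,1/2)}(x) belongs to X_{c,loc}, but (J^β_{0+,c} f)(x) = +∞ for every x > 1; hence the inclusion Dom J^β_{0+,c} ⊂ X_{c,loc} is strict for β > 1. -/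
/-!
The substitution `u = exp (-t)` turns `∫₀^{1/2} φ(-log u) du / u` into `∫_{log 2}^∞ φ(t) dt`.
With `φ(t) = t^{-β}` this is finite, so `x^{c-1} |f(x)|`, which is `x⁻¹ |log x|^{-β}` on `(0, 1/2)`
and `0` elsewhere, is integrable.
For `x ≥ 1` and `u < 1/2` we have `log (x/u) ≥ -log u`, so the Hadamard integrand dominates
`u⁻¹ (-log u)^{β-1-β} = 1/(u |log u|)`, which corresponds to `φ(t) = t⁻¹` and is not integrable.
-/

open MeasureTheory Set

open Real

theorem Real.rpow_sub_one_mul_rpow_neg {x : ℝ} (hx : 0 < x) (y : ℝ) :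
    x ^ (y - 1) * x ^ (-y) = x⁻¹ := by
  rw [← rpow_add hx, show y - 1 + -y = -1 by ring, rpow_neg_one]

theorem Real.exp_neg_log_two : exp (-log 2) = 1 / 2 := by
  rw [exp_neg, exp_log two_pos, one_div]

theorem lintegral_Ioo_inv_mul_comp_neg_log (a : ℝ) (φ : ℝ → ℝ) :
    ∫⁻ u in Ioo 0 (exp (-a)), ENNReal.ofReal (u⁻¹ * φ (-log u)) =
      ∫⁻ t in Ioi a, ENNReal.ofReal (φ t) := by
  have himage : (fun t => exp (-t)) '' Ioi a = Ioo 0 (exp (-a)) := by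
    rw [← image_image exp Neg.neg, image_neg_Ioi, image_exp_Iio]
  rw [← himage, lintegral_image_eq_lintegral_abs_deriv_mul measurableSet_Ioi
    (fun t _ => ((hasDerivAt_neg t).exp).hasDerivWithinAt)
    (fun s _ t _ h => neg_injective (exp_injective h))]
  refine setLIntegral_congr_fun measurableSet_Ioi fun t _ => ?_
  rw [← ENNReal.ofReal_mul (abs_nonneg _), log_exp, neg_neg, abs_mul, abs_neg, abs_one,
    mul_one, abs_of_pos (exp_pos _), ← mul_assoc, mul_inv_cancel₀ (exp_pos _).ne', one_mul]

theorem integrableOn_Ioo_inv_mul_neg_log_rpow {a β : ℝ} (ha : 0 < a) (hβ : 1 < β) :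
    IntegrableOn (fun u => u⁻¹ * (-log u) ^ (-β)) (Ioo 0 (exp (-a))) := by
  have hfinite : ∫⁻ t in Ioi a, ENNReal.ofReal (t ^ (-β)) ≠ ⊤ :=
    (integrableOn_Ioi_rpow_of_lt (by linarith) ha).lintegral_lt_top.ne
  rw [← lintegral_Ioo_inv_mul_comp_neg_log] at hfinite
  refine (lintegral_ofReal_ne_top_iff_integrable (by fun_prop) ?_).mp hfinite
  filter_upwards [ae_restrict_mem measurableSet_Ioo] with u hu
  have hlog : log u < -a := (log_lt_iff_lt_exp hu.1).mpr hu.2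
  exact mul_nonneg (inv_nonneg.mpr hu.1.le) (rpow_nonneg (by linarith) _)

theorem lintegral_Ioo_inv_mul_inv_neg_log_eq_top {a : ℝ} (ha : 0 < a) :
    ∫⁻ u in Ioo 0 (exp (-a)), ENNReal.ofReal (u⁻¹ * (-log u)⁻¹) = ⊤ := by
  rw [lintegral_Ioo_inv_mul_comp_neg_log a (·⁻¹)]
  by_contra hfinite
  refine not_integrableOn_Ioi_inv
    ((lintegral_ofReal_ne_top_iff_integrable (by fun_prop) ?_).mp hfinite)
  filter_upwards [ae_restrict_mem measurableSet_Ioi] with t ht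
  exact inv_nonneg.mpr (ha.trans ht).le

noncomputable def logSingularFn (c β : ℝ) (x : ℝ) : ℂ :=
  if x ∈ Ioo (0 : ℝ) (1 / 2) then ((x ^ (-c) * |log x| ^ (-β) : ℝ) : ℂ) else 0

theorem rpow_mul_norm_logSingularFn (c β x : ℝ) :
    x ^ (c - 1) * ‖logSingularFn c β x‖ =
      (Ioo 0 (1 / 2)).indicator (fun u => u⁻¹ * (-log u) ^ (-β)) x := by
  unfold logSingularFn
  split_ifs with hx
  · have hlog : log x < 0 := log_neg hx.1 (hx.2.trans (by norm_num))
    rw [indicator_of_mem hx, Complex.norm_real, norm_of_nonneg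
      (mul_nonneg (rpow_nonneg hx.1.le _) (rpow_nonneg (abs_nonneg _) _)), ← mul_assoc,
      rpow_sub_one_mul_rpow_neg hx.1, abs_of_neg hlog]
  · rw [indicator_of_notMem hx, norm_zero, mul_zero]

theorem memXloc_logSingularFn (c : ℝ) {β : ℝ} (hβ : 1 < β) :
    memXloc c (logSingularFn c β) := by
  intro a _
  have hint := integrableOn_Ioo_inv_mul_neg_log_rpow (log_pos one_lt_two) hβ
  rw [exp_neg_log_two, ← integrable_indicator_iff measurableSet_Ioo] at hint
  simp_rw [rpow_mul_norm_logSingularFn]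
  exact hint.integrableOn

theorem lintegral_hadamard_logSingularFn_eq_top (c : ℝ) {β x : ℝ} (hβ : 1 ≤ β) (hx : 1 ≤ x) :
    ∫⁻ u in Ioo 0 x, ENNReal.ofReal
      (u ^ (c - 1) * log (x / u) ^ (β - 1) * ‖logSingularFn c β u‖) = ⊤ := by
  have hdom : ∀ u ∈ Ioo (0 : ℝ) (1 / 2), u⁻¹ * (-log u)⁻¹ ≤
      u ^ (c - 1) * log (x / u) ^ (β - 1) * ‖logSingularFn c β u‖ := by
    intro u hu
    have hL : 0 < -log u := neg_pos.mpr (log_neg hu.1 (hu.2.trans (by norm_num)))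
    have hle : -log u ≤ log (x / u) := by
      rw [log_div (by linarith) hu.1.ne']
      linarith [log_nonneg hx]
    calc u⁻¹ * (-log u)⁻¹ = (-log u) ^ (β - 1) * (u⁻¹ * (-log u) ^ (-β)) := by
          rw [mul_left_comm, rpow_sub_one_mul_rpow_neg hL]
      _ ≤ log (x / u) ^ (β - 1) * (u⁻¹ * (-log u) ^ (-β)) := by
          have hweight : 0 ≤ u⁻¹ * (-log u) ^ (-β) :=
            mul_nonneg (inv_nonneg.mpr hu.1.le) (rpow_nonneg hL.le _)
          gcongr
      _ = u ^ (c - 1) * log (x / u) ^ (β - 1) * ‖logSingularFn c β u‖ := by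
          rw [mul_right_comm, rpow_mul_norm_logSingularFn, indicator_of_mem hu, mul_comm]
  refine eq_top_mono ?_ (lintegral_Ioo_inv_mul_inv_neg_log_eq_top (log_pos one_lt_two))
  rw [exp_neg_log_two]
  calc _ ≤ _ := setLIntegral_mono' measurableSet_Ioo fun u hu =>
        ENNReal.ofReal_le_ofReal (hdom u hu)
    _ ≤ _ := lintegral_mono_set (Ioo_subset_Ioo_right (by linarith))

/-- The function f(x) = x^{-c}|log x|^{-β} χ_{(0,1/2)}(x) belongs to X_{c,loc}
but its Hadamard-type integral of order β > 1 is infinite for every x > 1. -/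
theorem stmt9 (β c : ℝ) (hβ : 1 < β) :
    memXloc c (fun x : ℝ =>
      if x ∈ Set.Ioo (0 : ℝ) (1 / 2) then
        ((x ^ (-c) * |Real.log x| ^ (-β) : ℝ) : ℂ) else 0) ∧
    ∀ x : ℝ, 1 < x →
      (∫⁻ u in Set.Ioo (0 : ℝ) x,
        ENNReal.ofReal (u ^ (c - 1) * Real.log (x / u) ^ (β - 1) *
          ‖(fun y : ℝ =>
            if y ∈ Set.Ioo (0 : ℝ) (1 / 2) then
              ((y ^ (-c) * |Real.log y| ^ (-β) : ℝ) : ℂ) else 0) u‖)) = ⊤ :=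
  ⟨memXloc_logSingularFn c hβ,
    fun _ hx => lintegral_hadamard_logSingularFn_eq_top c hβ.le hx.le⟩
end

section
/- Let α > 0, c ∈ ℝ. If f ∈ Dom J^{α+1}_{0+,c}, then J^α_{0+,c} f ∈ X_{c,loc}; in fact for every a > 0, ∫_0^a x^{c-1} (J^α_{0+,c}|f|)(x) dx = (1/(αΓ(α))) ∫_0^a u^{c-1} |f(u)| (log(a/u))^α du < ∞. -/
open MeasureTheory Set

noncomputable def hadamardJ (α c : ℝ) (f : ℝ → ℂ) (x : ℝ) : ℂ :=
  ((1 / Real.Gamma α : ℝ) : ℂ) *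
    ∫ u in Set.Ioo (0 : ℝ) x,
      (((u / x) ^ c * Real.log (x / u) ^ (α - 1) / u : ℝ) : ℂ) * f u

/-- J^α_{0+,c}|f|, the Hadamard-type integral of the absolute value of f -/
noncomputable def hadamardJabs (α c : ℝ) (f : ℝ → ℂ) (x : ℝ) : ℝ :=
  (1 / Real.Gamma α) *
    ∫ u in Set.Ioo (0 : ℝ) x,
      ((u / x) ^ c * Real.log (x / u) ^ (α - 1) / u) * ‖f u‖

/-!
By Tonelli on the triangle `0 < u < x < a` and
`∫_u^a (log (x/u))^(α-1) dx/x = (log (a/u))^α / α`, the integral of `x^(c-1) J^α|f|` over `(0, a)`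
equals `(1/(αΓ(α))) ∫_0^a u^(c-1) |f u| (log (a/u))^α du`. This is finite because, for any `x > a`
at which the defining integral of `J^(α+1)|f|` converges, it is dominated by that integral.
Integrability of `x^(c-1) J^α f` then follows from `|J^α f| ≤ J^α|f|`.
-/

open Function
open scoped ENNReal

lemma measurableSet_triangle (b : ℝ) : MeasurableSet {p : ℝ × ℝ | b < p.2 ∧ p.2 < p.1} :=
  (measurableSet_lt measurable_const measurable_snd).inter
    (measurableSet_lt measurable_snd measurable_fst)

lemma indicator_Ioo_eq_indicator_triangle {β : Type*} [Zero β] (F : ℝ → ℝ → β) (b x u : ℝ) :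
    (Ioo b x).indicator (F x) u
      = {p : ℝ × ℝ | b < p.2 ∧ p.2 < p.1}.indicator (uncurry F) (x, u) :=
  rfl

lemma Measurable.lintegral_Ioo {G : ℝ → ℝ → ℝ≥0∞} (hG : Measurable (uncurry G)) (b : ℝ) :
    Measurable fun x => ∫⁻ u in Ioo b x, G x u := by
  simp_rw [← lintegral_indicator measurableSet_Ioo, indicator_Ioo_eq_indicator_triangle]
  exact (hG.indicator (measurableSet_triangle b)).lintegral_prod_right'

lemma StronglyMeasurable.integral_Ioo {E : Type*} [NormedAddCommGroup E] [NormedSpace ℝ E]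
    {F : ℝ → ℝ → E} (hF : StronglyMeasurable (uncurry F)) (b : ℝ) :
    StronglyMeasurable fun x => ∫ u in Ioo b x, F x u := by
  simp_rw [← integral_indicator measurableSet_Ioo, indicator_Ioo_eq_indicator_triangle]
  exact (hF.indicator (measurableSet_triangle b)).integral_prod_right'

lemma lintegral_Ioo_lintegral_Ioo_swap {G : ℝ → ℝ → ℝ≥0∞} (hG : Measurable (uncurry G))
    (b a : ℝ) :
    ∫⁻ x in Ioo b a, ∫⁻ u in Ioo b x, G x u = ∫⁻ u in Ioo b a, ∫⁻ x in Ioo u a, G x u := by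
  have hmeas : Measurable (uncurry fun x u => (Ioo b x).indicator (G x) u) := by
    simp_rw [uncurry_def, indicator_Ioo_eq_indicator_triangle]
    exact hG.indicator (measurableSet_triangle b)
  calc ∫⁻ x in Ioo b a, ∫⁻ u in Ioo b x, G x u
      = ∫⁻ x in Ioo b a, ∫⁻ u in Ioo b a, (Ioo b x).indicator (G x) u := by
        refine setLIntegral_congr_fun measurableSet_Ioo fun x hx => ?_
        rw [lintegral_indicator measurableSet_Ioo, Measure.restrict_restrict measurableSet_Ioo,
          inter_eq_left.mpr (Ioo_subset_Ioo_right hx.2.le)]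
    _ = ∫⁻ u in Ioo b a, ∫⁻ x in Ioo b a, (Ioo b x).indicator (G x) u :=
        lintegral_lintegral_swap hmeas.aemeasurable
    _ = ∫⁻ u in Ioo b a, ∫⁻ x in Ioo u a, G x u := by
        refine setLIntegral_congr_fun measurableSet_Ioo fun u hu => ?_
        have hind : ∀ x, (Ioo b x).indicator (G x) u = (Ioi u).indicator (G · u) x := by
          intro x
          simp only [indicator_apply, mem_Ioo, mem_Ioi, hu.1, true_and]
        rw [lintegral_congr hind, lintegral_indicator measurableSet_Ioi,
          Measure.restrict_restrict measurableSet_Ioi, Ioi_inter_Ioo, max_eq_left hu.1.le]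

lemma hasDerivAt_log_div_rpow {α u x : ℝ} (hα : α ≠ 0) (hu : 0 < u) (hux : u < x) :
    HasDerivAt (fun y => Real.log (y / u) ^ α / α) (Real.log (x / u) ^ (α - 1) / x) x := by
  have hx : 0 < x := hu.trans hux
  have hlog : 0 < Real.log (x / u) := Real.log_pos ((one_lt_div hu).mpr hux)
  refine ((((hasDerivAt_id' x).div_const u).log (div_pos hx hu).ne').rpow_const
    (p := α) (Or.inl hlog.ne')).div_const α |>.congr_deriv ?_
  field_simp

lemma lintegral_Ioo_log_div_rpow {α u a : ℝ} (hα : 0 < α) (hu : 0 < u) (hua : u ≤ a) :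
    ∫⁻ x in Ioo u a, ENNReal.ofReal (Real.log (x / u) ^ (α - 1) / x)
      = ENNReal.ofReal (Real.log (a / u) ^ α / α) := by
  have hcont : ContinuousOn (fun y => Real.log (y / u) ^ α / α) (Icc u a) := by
    refine ContinuousOn.div_const (fun y hy => ?_) α
    have hy : 0 < y := hu.trans_le hy.1
    exact ((continuousAt_id.div_const u).log (div_pos hy hu).ne').rpow_const
      (Or.inr hα.le) |>.continuousWithinAt
  have hderiv : ∀ x ∈ Ioo u a,
      HasDerivAt (fun y => Real.log (y / u) ^ α / α) (Real.log (x / u) ^ (α - 1) / x) x :=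
    fun x hx => hasDerivAt_log_div_rpow hα.ne' hu hx.1
  have hnonneg : ∀ x ∈ Ioo u a, 0 ≤ Real.log (x / u) ^ (α - 1) / x := fun x hx =>
    div_nonneg (Real.rpow_nonneg (Real.log_nonneg ((one_le_div hu).mpr hx.1.le)) _)
      (hu.trans hx.1).le
  have hIoc := intervalIntegral.integrableOn_deriv_of_nonneg hcont hderiv hnonneg
  have hint := hIoc.mono_set Ioo_subset_Ioc_self
  rw [← ofReal_integral_eq_lintegral_ofReal hint
      ((ae_restrict_iff' measurableSet_Ioo).mpr (ae_of_all _ hnonneg)),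
    ← integral_Ioc_eq_integral_Ioo, ← intervalIntegral.integral_of_le hua,
    intervalIntegral.integral_eq_sub_of_hasDerivAt_of_le hua hcont hderiv
      ((intervalIntegrable_iff_integrableOn_Ioc_of_le hua).mpr hIoc),
    div_self hu.ne', Real.log_one, Real.zero_rpow hα.ne', zero_div, sub_zero]

lemma lintegral_Ioo_lintegral_Ioo_mul_log_div_rpow {α : ℝ} (hα : 0 < α) {φ : ℝ → ℝ≥0∞}
    (hφ : Measurable φ) (a : ℝ) :
    ∫⁻ x in Ioo 0 a, ∫⁻ u in Ioo 0 x, φ u * ENNReal.ofReal (Real.log (x / u) ^ (α - 1) / x)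
      = ∫⁻ u in Ioo 0 a, φ u * ENNReal.ofReal (Real.log (a / u) ^ α / α) := by
  rw [lintegral_Ioo_lintegral_Ioo_swap (by fun_prop)]
  refine setLIntegral_congr_fun measurableSet_Ioo fun u hu => ?_
  rw [lintegral_const_mul _ (by fun_prop), lintegral_Ioo_log_div_rpow hα hu.1 hu.2.le]

lemma memDomJ.integrableOn_rpow_mul_norm_mul_log_rpow {α c a : ℝ} {f : ℝ → ℂ}
    (hdom : memDomJ (α + 1) c f) (hα : 0 ≤ α) (hf : Measurable f) (ha : 0 < a) :
    IntegrableOn (fun u => u ^ (c - 1) * ‖f u‖ * Real.log (a / u) ^ α) (Ioo 0 a) := by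
  obtain ⟨x, hax : a < x, hx⟩ := Measure.exists_mem_of_measure_ne_zero_of_ae
    (by simp [Real.volume_Ioi]) (ae_restrict_of_ae_restrict_of_subset (Ioi_subset_Ioi ha.le) hdom)
  refine ⟨by fun_prop, ?_⟩
  rw [hasFiniteIntegral_iff_ofReal ((ae_restrict_iff' measurableSet_Ioo).mpr
    (ae_of_all _ fun u ⟨hu, hua⟩ => by
      have := Real.log_nonneg ((one_le_div hu).mpr hua.le)
      positivity))]
  refine lt_of_le_of_lt ?_ hx
  calc ∫⁻ u in Ioo 0 a, ENNReal.ofReal (u ^ (c - 1) * ‖f u‖ * Real.log (a / u) ^ α)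
      ≤ ∫⁻ u in Ioo 0 a, ENNReal.ofReal
          (u ^ (c - 1) * Real.log (x / u) ^ (α + 1 - 1) * ‖f u‖) := by
        refine setLIntegral_mono' measurableSet_Ioo fun u hu => ENNReal.ofReal_le_ofReal ?_
        have hlog : Real.log (a / u) ^ α ≤ Real.log (x / u) ^ α :=
          Real.rpow_le_rpow (Real.log_nonneg ((one_le_div hu.1).mpr hu.2.le))
            (Real.log_le_log (div_pos ha hu.1) (div_le_div_of_nonneg_right hax.le hu.1.le)) hα
        rw [add_sub_cancel_right, mul_right_comm (u ^ (c - 1)) (Real.log (x / u) ^ α)]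
        exact mul_le_mul_of_nonneg_left hlog
          (mul_nonneg (Real.rpow_nonneg hu.1.le _) (norm_nonneg _))
    _ ≤ _ := lintegral_mono_set (Ioo_subset_Ioo_right hax.le)

lemma norm_hadamardJ_le {α : ℝ} (hα : 0 < α) (c : ℝ) (f : ℝ → ℂ) (x : ℝ) :
    ‖hadamardJ α c f x‖ ≤ hadamardJabs α c f x := by
  have hΓ : 0 < 1 / Real.Gamma α := one_div_pos.mpr (Real.Gamma_pos_of_pos hα)
  rw [hadamardJ, hadamardJabs, norm_mul, Complex.norm_real, Real.norm_of_nonneg hΓ.le]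
  refine mul_le_mul_of_nonneg_left ((norm_integral_le_integral_norm _).trans_eq ?_) hΓ.le
  refine setIntegral_congr_fun measurableSet_Ioo fun u ⟨hu, hux⟩ => ?_
  have := Real.log_nonneg ((one_le_div hu).mpr hux.le)
  have := hu.trans hux
  rw [norm_mul, Complex.norm_real, Real.norm_of_nonneg (by positivity)]

lemma measurable_hadamardJ (α c : ℝ) {f : ℝ → ℂ} (hf : Measurable f) :
    Measurable (hadamardJ α c f) :=
  (StronglyMeasurable.integral_Ioo (by fun_prop) 0).measurable.const_mul _

/-- `x ^ (c - 1) * Γ(α) * J^α_{0+,c}|f|(x)` as a lower Lebesgue integral, which carries no junk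
value when the integral diverges. -/
noncomputable def hadamardJabsLIntegral (α c : ℝ) (f : ℝ → ℂ) (x : ℝ) : ℝ≥0∞ :=
  ∫⁻ u in Ioo 0 x, ENNReal.ofReal (u ^ (c - 1) * ‖f u‖) *
    ENNReal.ofReal (Real.log (x / u) ^ (α - 1) / x)

lemma measurable_hadamardJabsLIntegral (α c : ℝ) {f : ℝ → ℂ} (hf : Measurable f) :
    Measurable (hadamardJabsLIntegral α c f) :=
  Measurable.lintegral_Ioo (G := fun x u => ENNReal.ofReal (u ^ (c - 1) * ‖f u‖) *
    ENNReal.ofReal (Real.log (x / u) ^ (α - 1) / x)) (by fun_prop) 0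

lemma rpow_mul_hadamardJabs_eq {α c x : ℝ} {f : ℝ → ℂ} (hf : Measurable f) (hx : 0 < x) :
    x ^ (c - 1) * hadamardJabs α c f x
      = 1 / Real.Gamma α * (hadamardJabsLIntegral α c f x).toReal := by
  have hkernel : ∀ u ∈ Ioo 0 x,
      x ^ (c - 1) * ((u / x) ^ c * Real.log (x / u) ^ (α - 1) / u * ‖f u‖)
        = u ^ (c - 1) * ‖f u‖ * (Real.log (x / u) ^ (α - 1) / x) := fun u ⟨hu, _⟩ => by
    rw [Real.div_rpow hu.le hx.le, Real.rpow_sub_one hx.ne', Real.rpow_sub_one hu.ne']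
    have := (Real.rpow_pos_of_pos hx c).ne'
    field_simp
  have hnonneg : ∀ u ∈ Ioo 0 x, 0 ≤ Real.log (x / u) ^ (α - 1) / x := fun u ⟨hu, hux⟩ =>
    div_nonneg (Real.rpow_nonneg (Real.log_nonneg ((one_le_div hu).mpr hux.le)) _) hx.le
  rw [hadamardJabs, hadamardJabsLIntegral, mul_left_comm, ← integral_const_mul,
    setIntegral_congr_fun measurableSet_Ioo hkernel, integral_eq_lintegral_of_nonneg_ae
      ((ae_restrict_iff' measurableSet_Ioo).mpr (ae_of_all _ fun u hu =>
        mul_nonneg (mul_nonneg (Real.rpow_nonneg hu.1.le _) (norm_nonneg _)) (hnonneg u hu)))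
      (by fun_prop)]
  congr 2
  refine setLIntegral_congr_fun measurableSet_Ioo fun u hu => ?_
  rw [ENNReal.ofReal_mul (mul_nonneg (Real.rpow_nonneg hu.1.le _) (norm_nonneg _))]

lemma setLIntegral_hadamardJabsLIntegral {α c a : ℝ} (hα : 0 < α) {f : ℝ → ℂ}
    (hf : Measurable f)
    (hR : IntegrableOn (fun u => u ^ (c - 1) * ‖f u‖ * Real.log (a / u) ^ α) (Ioo 0 a)) :
    ∫⁻ x in Ioo 0 a, hadamardJabsLIntegral α c f x
      = ENNReal.ofReal (∫ u in Ioo 0 a, u ^ (c - 1) * ‖f u‖ * Real.log (a / u) ^ α / α) := by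
  have hnonneg : ∀ u ∈ Ioo 0 a, 0 ≤ u ^ (c - 1) * ‖f u‖ := fun u hu =>
    mul_nonneg (Real.rpow_nonneg hu.1.le _) (norm_nonneg _)
  simp only [hadamardJabsLIntegral]
  rw [lintegral_Ioo_lintegral_Ioo_mul_log_div_rpow hα (by fun_prop),
    ofReal_integral_eq_lintegral_ofReal (hR.div_const α)
      ((ae_restrict_iff' measurableSet_Ioo).mpr (ae_of_all _ fun u hu => by
        have := Real.log_nonneg ((one_le_div hu.1).mpr hu.2.le)
        have := hnonneg u hu
        positivity))]
  refine setLIntegral_congr_fun measurableSet_Ioo fun u hu => ?_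
  rw [← ENNReal.ofReal_mul (hnonneg u hu), mul_div_assoc]

lemma integrableOn_rpow_mul_hadamardJabs {α c a : ℝ} (hα : 0 < α) {f : ℝ → ℂ}
    (hf : Measurable f)
    (hR : IntegrableOn (fun u => u ^ (c - 1) * ‖f u‖ * Real.log (a / u) ^ α) (Ioo 0 a)) :
    IntegrableOn (fun x => x ^ (c - 1) * hadamardJabs α c f x) (Ioo 0 a) := by
  refine Integrable.congr
    (f := fun x => 1 / Real.Gamma α * (hadamardJabsLIntegral α c f x).toReal)
    ((integrable_toReal_of_lintegral_ne_top
      (measurable_hadamardJabsLIntegral α c hf).aemeasurable ?_).const_mul _) ?_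
  · rw [setLIntegral_hadamardJabsLIntegral hα hf hR]
    exact ENNReal.ofReal_ne_top
  · exact (ae_restrict_iff' measurableSet_Ioo).mpr
      (ae_of_all _ fun x hx => (rpow_mul_hadamardJabs_eq hf hx.1).symm)

lemma setIntegral_rpow_mul_hadamardJabs {α c a : ℝ} (hα : 0 < α) {f : ℝ → ℂ}
    (hf : Measurable f)
    (hR : IntegrableOn (fun u => u ^ (c - 1) * ‖f u‖ * Real.log (a / u) ^ α) (Ioo 0 a)) :
    ∫ x in Ioo 0 a, x ^ (c - 1) * hadamardJabs α c f x
      = 1 / (α * Real.Gamma α) *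
          ∫ u in Ioo 0 a, u ^ (c - 1) * ‖f u‖ * Real.log (a / u) ^ α := by
  have hmeas := measurable_hadamardJabsLIntegral α c hf
  have hfin := setLIntegral_hadamardJabsLIntegral hα hf hR
  rw [setIntegral_congr_fun measurableSet_Ioo fun x hx => rpow_mul_hadamardJabs_eq hf hx.1,
    integral_const_mul, integral_toReal hmeas.aemeasurable
      (ae_lt_top hmeas (hfin ▸ ENNReal.ofReal_ne_top)), hfin,
    ENNReal.toReal_ofReal (setIntegral_nonneg measurableSet_Ioo fun u hu => ?_), integral_div]
  · field_simp
  · have := Real.log_nonneg ((one_le_div hu.1).mpr hu.2.le)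
    have := hu.1
    positivity

/-- If f ∈ Dom J^{α+1}_{0+,c}, then J^α_{0+,c} f ∈ X_{c,loc}; moreover for every a > 0,
∫_0^a x^{c-1}(J^α_{0+,c}|f|)(x) dx = (1/(αΓ(α))) ∫_0^a u^{c-1}|f(u)|(log(a/u))^α du < ∞. -/
theorem stmt12 (α c : ℝ) (hα : 0 < α) (f : ℝ → ℂ) (hmeas : Measurable f)
    (hdom : memDomJ (α + 1) c f) :
    (∀ a : ℝ, 0 < a →
      IntegrableOn (fun x : ℝ => x ^ (c - 1) * ‖hadamardJ α c f x‖)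
        (Set.Ioo 0 a)) ∧
    (∀ a : ℝ, 0 < a →
      IntegrableOn
        (fun u : ℝ => u ^ (c - 1) * ‖f u‖ * Real.log (a / u) ^ α)
        (Set.Ioo 0 a) ∧
      (∫ x in Set.Ioo (0 : ℝ) a, x ^ (c - 1) * hadamardJabs α c f x)
        = (1 / (α * Real.Gamma α)) *
            ∫ u in Set.Ioo (0 : ℝ) a,
              u ^ (c - 1) * ‖f u‖ * Real.log (a / u) ^ α) := by
  have hR := fun a (ha : 0 < a) => hdom.integrableOn_rpow_mul_norm_mul_log_rpow hα.le hmeas ha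
  refine ⟨fun a ha => ?_,
    fun a ha => ⟨hR a ha, setIntegral_rpow_mul_hadamardJabs hα hmeas (hR a ha)⟩⟩
  have hJ := measurable_hadamardJ α c hmeas
  refine (integrableOn_rpow_mul_hadamardJabs hα hmeas (hR a ha)).mono' (by fun_prop) ?_
  refine (ae_restrict_iff' measurableSet_Ioo).mpr (ae_of_all _ fun x hx => ?_)
  have hx0 := Real.rpow_nonneg hx.1.le (c - 1)
  rw [norm_mul, Real.norm_of_nonneg hx0, norm_norm]
  exact mul_le_mul_of_nonneg_left (norm_hadamardJ_le hα c f x) hx0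
end

section
/- Differentiation under the Hadamard-type integral: for 0 < γ ≤ 1, c ∈ ℝ, and suitable differentiable f, one has (J^γ_{0+,c} f)'(x) = (J^γ_{0+,c+1} f')(x), and by induction (J^γ_{0+,c} f)^{(k)}(x) = (J^γ_{0+,c+k} f^{(k)})(x) for k ∈ ℕ, where (J^γ_{0+,c} f)(x) = (1/Γ(γ)) ∫_1^∞ v^{-(c+1)} (log v)^{γ-1} f(x/v) dv. -/
open MeasureTheory Set

/-- Hadamard-type integral in the form
(J^γ_{0+,c} f)(x) = (1/Γ(γ)) ∫_1^∞ v^{-(c+1)} (log v)^{γ-1} f(x/v) dv -/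
noncomputable def hadamardJV (γ c : ℝ) (f : ℝ → ℂ) (x : ℝ) : ℂ :=
  ((1 / Real.Gamma γ : ℝ) : ℂ) *
    ∫ v in Set.Ioi (1 : ℝ),
      ((v ^ (-(c + 1)) * Real.log v ^ (γ - 1) : ℝ) : ℂ) * f (x / v)

open scoped ContDiff

namespace HadamardAux

lemma natCast_le_infty (n : ℕ) : (n : WithTop ℕ∞) ≤ ∞ := by
  exact_mod_cast (le_top : (n : ℕ∞) ≤ ⊤)

lemma natCast_add_one_le_infty (n : ℕ) : ((n : WithTop ℕ∞) + 1) ≤ ∞ := by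
  exact_mod_cast (le_top : ((n : ℕ∞) + 1) ≤ ⊤)

lemma one_le_infty : (1 : WithTop ℕ∞) ≤ ∞ := by
  exact_mod_cast (le_top : (1 : ℕ∞) ≤ ⊤)

lemma kernel_contOn (γ q : ℝ) :
    ContinuousOn (fun v : ℝ => v ^ q * Real.log v ^ (γ - 1)) (Ioi 1) := by
  apply ContinuousOn.mul
  · exact continuousOn_id.rpow_const fun v hv => Or.inl (ne_of_gt (lt_trans one_pos hv))
  · refine ContinuousOn.rpow_const ?_ fun v hv => Or.inl (ne_of_gt (Real.log_pos hv))
    exact Real.continuousOn_log.mono fun v hv => by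
      simpa using (ne_of_gt (lt_trans one_pos hv))

lemma integrand_contOn (γ q x : ℝ) {g : ℝ → ℂ} (hgc : Continuous g) :
    ContinuousOn (fun v : ℝ => ((v ^ q * Real.log v ^ (γ - 1) : ℝ) : ℂ) * g (x / v))
      (Ioi 1) := by
  apply ContinuousOn.mul
  · exact Complex.continuous_ofReal.comp_continuousOn (kernel_contOn γ q)
  · exact hgc.comp_continuousOn
      (continuousOn_const.div continuousOn_id fun v hv => ne_of_gt (lt_trans one_pos hv))

lemma one_le_e : (1 : ℝ) ≤ Real.exp 1 := by
  linarith [Real.add_one_le_exp 1]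

lemma logpow_near_one (γ q : ℝ) (hγ0 : 0 < γ) (hγ1 : γ ≤ 1) :
    IntegrableOn (fun v : ℝ => v ^ q * Real.log v ^ (γ - 1)) (Ioc 1 (Real.exp 1)) := by
  have h1e : (1 : ℝ) ≤ Real.exp 1 := one_le_e
  have hbase : IntervalIntegrable (fun t : ℝ => t ^ (γ - 1)) volume 0 (Real.exp 1 - 1) :=
    intervalIntegral.intervalIntegrable_rpow' (by linarith)
  have hshift : IntervalIntegrable (fun v : ℝ => (v - 1) ^ (γ - 1)) volume 1 (Real.exp 1) := by
    have := hbase.comp_sub_right 1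
    simpa using this
  have hg : IntegrableOn (fun v : ℝ => (v - 1) ^ (γ - 1)) (Ioc 1 (Real.exp 1)) :=
    (intervalIntegrable_iff_integrableOn_Ioc_of_le h1e).mp hshift
  refine Integrable.mono' (hg.const_mul ((max 1 (Real.exp 1 ^ q)) * Real.exp (1 - γ)))
    (((kernel_contOn γ q).mono Ioc_subset_Ioi_self).aestronglyMeasurable measurableSet_Ioc) ?_
  rw [ae_restrict_iff' measurableSet_Ioc]
  refine Filter.Eventually.of_forall fun v hv => ?_
  obtain ⟨hv1, hve⟩ := hv
  have hv0 : (0 : ℝ) < v := lt_trans one_pos hv1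
  have hlogpos : 0 < Real.log v := Real.log_pos hv1
  have hnn : 0 ≤ v ^ q * Real.log v ^ (γ - 1) :=
    mul_nonneg (Real.rpow_nonneg hv0.le _) (Real.rpow_nonneg hlogpos.le _)
  rw [Real.norm_eq_abs, abs_of_nonneg hnn]
  have h1 : v ^ q ≤ max 1 (Real.exp 1 ^ q) := by
    rcases le_or_gt 0 q with hq | hq
    · exact le_max_of_le_right (Real.rpow_le_rpow hv0.le hve hq)
    · exact le_max_of_le_left (Real.rpow_le_one_of_one_le_of_nonpos hv1.le hq.le)
  have h2 : Real.log v ^ (γ - 1) ≤ (v - 1) ^ (γ - 1) * Real.exp (1 - γ) := by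
    have hvv : (v - 1) / Real.exp 1 ≤ Real.log v := by
      have hl : Real.log v⁻¹ ≤ v⁻¹ - 1 := Real.log_le_sub_one_of_pos (by positivity)
      rw [Real.log_inv] at hl
      have h5 : 1 - v⁻¹ ≤ Real.log v := by linarith
      have h3 : (v - 1) / Real.exp 1 ≤ (v - 1) / v :=
        div_le_div_of_nonneg_left (by linarith) hv0 hve
      have h4 : (v - 1) / v = 1 - v⁻¹ := by field_simp
      linarith
    have hpos : 0 < (v - 1) / Real.exp 1 := by
      have : 0 < v - 1 := by linarith
      positivity
    have hle := Real.rpow_le_rpow_of_nonpos hpos hvv (by linarith : γ - 1 ≤ 0)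
    calc Real.log v ^ (γ - 1) ≤ ((v - 1) / Real.exp 1) ^ (γ - 1) := hle
      _ = (v - 1) ^ (γ - 1) * Real.exp (1 - γ) := by
          rw [Real.div_rpow (by linarith) (Real.exp_pos 1).le, Real.exp_one_rpow,
            div_eq_mul_inv, ← Real.exp_neg]
          ring_nf
  calc v ^ q * Real.log v ^ (γ - 1)
      ≤ (max 1 (Real.exp 1 ^ q)) * ((v - 1) ^ (γ - 1) * Real.exp (1 - γ)) := by
        apply mul_le_mul h1 h2 (Real.rpow_nonneg hlogpos.le _)
        exact le_trans zero_le_one (le_max_left _ _)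
    _ = (max 1 (Real.exp 1 ^ q)) * Real.exp (1 - γ) * (v - 1) ^ (γ - 1) := by ring

lemma logpow_tail (γ p : ℝ) (hγ1 : γ ≤ 1) (hp : 1 < p) :
    IntegrableOn (fun v : ℝ => v ^ (-p) * Real.log v ^ (γ - 1)) (Ioi (Real.exp 1)) := by
  refine Integrable.mono' (integrableOn_Ioi_rpow_of_lt (by linarith : -p < -1) (Real.exp_pos 1))
    (((kernel_contOn γ (-p)).mono (Ioi_subset_Ioi one_le_e)).aestronglyMeasurable
      measurableSet_Ioi) ?_
  rw [ae_restrict_iff' measurableSet_Ioi]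
  refine Filter.Eventually.of_forall fun v hv => ?_
  have hv1 : (1 : ℝ) < v := lt_of_le_of_lt one_le_e hv
  have hv0 : (0 : ℝ) < v := lt_trans one_pos hv1
  have hlog1 : 1 ≤ Real.log v := (Real.le_log_iff_exp_le hv0).2 (le_of_lt hv)
  have hle : Real.log v ^ (γ - 1) ≤ 1 :=
    Real.rpow_le_one_of_one_le_of_nonpos hlog1 (by linarith)
  have hnn : 0 ≤ v ^ (-p) * Real.log v ^ (γ - 1) :=
    mul_nonneg (Real.rpow_nonneg hv0.le _) (Real.rpow_nonneg (by linarith) _)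
  rw [Real.norm_eq_abs, abs_of_nonneg hnn]
  calc v ^ (-p) * Real.log v ^ (γ - 1) ≤ v ^ (-p) * 1 := by
        exact mul_le_mul_of_nonneg_left hle (Real.rpow_nonneg hv0.le _)
    _ = v ^ (-p) := by ring

lemma kernel_int (γ p : ℝ) (hγ0 : 0 < γ) (hγ1 : γ ≤ 1) (hp : 1 < p) :
    IntegrableOn (fun v : ℝ => v ^ (-p) * Real.log v ^ (γ - 1)) (Ioi 1) := by
  rw [← Ioc_union_Ioi_eq_Ioi one_le_e]
  exact (logpow_near_one γ (-p) hγ0 hγ1).union (logpow_tail γ p hγ1 hp)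

lemma cov {p x : ℝ} (hx : 0 < x) {ψ : ℝ → ℝ}
    (hint : IntegrableOn (fun u => u ^ (p - 1) * ψ u) (Ioo 0 x)) :
    IntegrableOn (fun v => v ^ (-(p + 1)) * ψ (x / v)) (Ioi 1) := by
  have himg : (fun v : ℝ => x / v) '' (Ioi 1) = Ioo 0 x := by
    ext u
    constructor
    · rintro ⟨v, hv, rfl⟩
      have hv1 : (1 : ℝ) < v := hv
      have hv0 : (0 : ℝ) < v := lt_trans one_pos hv1
      refine ⟨by positivity, ?_⟩
      rw [div_lt_iff₀ hv0]
      nlinarith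
    · rintro ⟨hu0, hux⟩
      refine ⟨x / u, ?_, by field_simp⟩
      rw [mem_Ioi, lt_div_iff₀ hu0]
      linarith
  have hderiv : ∀ v ∈ Ioi (1 : ℝ),
      HasDerivWithinAt (fun v : ℝ => x / v) (-(x / v ^ 2)) (Ioi 1) v := by
    intro v hv
    have hv0 : (v : ℝ) ≠ 0 := ne_of_gt (lt_trans one_pos hv)
    have := ((hasDerivAt_inv hv0).const_mul x).hasDerivWithinAt (s := Ioi 1)
    simpa [div_eq_mul_inv, neg_div, mul_comm] using this
  have hinj : InjOn (fun v : ℝ => x / v) (Ioi 1) := by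
    intro v1 h1 v2 h2 he
    have hv1 : (v1 : ℝ) ≠ 0 := ne_of_gt (lt_trans one_pos h1)
    have hv2 : (v2 : ℝ) ≠ 0 := ne_of_gt (lt_trans one_pos h2)
    have he' : x / v1 = x / v2 := he
    rw [div_eq_div_iff hv1 hv2] at he'
    exact (mul_left_cancel₀ (ne_of_gt hx) he').symm
  have H := (integrableOn_image_iff_integrableOn_abs_deriv_smul measurableSet_Ioi hderiv hinj
      (fun u => u ^ (p - 1) * ψ u)).mp (by rwa [himg])
  have H2 := H.const_mul (x ^ p)⁻¹
  refine IntegrableOn.congr_fun H2 (fun v hv => ?_) measurableSet_Ioi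
  have hv1 : (1 : ℝ) < v := hv
  have hv0 : (0 : ℝ) < v := lt_trans one_pos hv1
  rw [smul_eq_mul, abs_neg, abs_of_pos (by positivity : 0 < x / v ^ 2)]
  rw [Real.div_rpow hx.le hv0.le, Real.rpow_sub hx, Real.rpow_sub hv0, Real.rpow_one,
    Real.rpow_neg hv0.le, Real.rpow_add hv0, Real.rpow_one]
  have hxp : x ^ p ≠ 0 := by positivity
  have hvp : v ^ p ≠ 0 := by positivity
  field_simp

lemma intA (γ p : ℝ) (hγ0 : 0 < γ) (hγ1 : γ ≤ 1) {ψ : ℝ → ℝ} (hψc : Continuous ψ)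
    (hψ0 : ∀ u, 0 ≤ ψ u) {x : ℝ} (hx : 0 < x)
    (hint : IntegrableOn (fun u => u ^ (p - 1) * ψ u) (Ioo 0 x)) :
    IntegrableOn (fun v => v ^ (-(p + 1)) * Real.log v ^ (γ - 1) * ψ (x / v)) (Ioi 1) := by
  have B := cov hx hint
  obtain ⟨M, hM⟩ :=
    (isCompact_Icc : IsCompact (Icc (0 : ℝ) x)).exists_bound_of_continuousOn hψc.continuousOn
  have hxmem : ∀ v : ℝ, 1 < v → x / v ∈ Icc (0 : ℝ) x := fun v hv =>
    ⟨by positivity, div_le_self hx.le hv.le⟩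
  have hcont : ContinuousOn
      (fun v : ℝ => v ^ (-(p + 1)) * Real.log v ^ (γ - 1) * ψ (x / v)) (Ioi 1) := by
    apply (kernel_contOn γ (-(p + 1))).mul
    exact hψc.comp_continuousOn
      (continuousOn_const.div continuousOn_id fun v hv => ne_of_gt (lt_trans one_pos hv))
  rw [← Ioc_union_Ioi_eq_Ioi one_le_e]
  apply IntegrableOn.union
  · refine Integrable.mono' ((logpow_near_one γ (-(p + 1)) hγ0 hγ1).const_mul M)
      (((hcont.mono Ioc_subset_Ioi_self)).aestronglyMeasurable measurableSet_Ioc) ?_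
    rw [ae_restrict_iff' measurableSet_Ioc]
    refine Filter.Eventually.of_forall fun v hv => ?_
    have hv1 : (1 : ℝ) < v := hv.1
    have hv0 : (0 : ℝ) < v := lt_trans one_pos hv1
    have hlog0 : 0 ≤ Real.log v := Real.log_nonneg hv1.le
    have hψle : ψ (x / v) ≤ M :=
      le_trans (le_abs_self _) (by simpa [Real.norm_eq_abs] using hM _ (hxmem v hv1))
    have hnn : 0 ≤ v ^ (-(p + 1)) * Real.log v ^ (γ - 1) :=
      mul_nonneg (Real.rpow_nonneg hv0.le _) (Real.rpow_nonneg hlog0 _)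
    rw [Real.norm_eq_abs, abs_of_nonneg (mul_nonneg hnn (hψ0 _))]
    calc v ^ (-(p + 1)) * Real.log v ^ (γ - 1) * ψ (x / v)
        ≤ v ^ (-(p + 1)) * Real.log v ^ (γ - 1) * M := mul_le_mul_of_nonneg_left hψle hnn
      _ = M * (v ^ (-(p + 1)) * Real.log v ^ (γ - 1)) := by ring
  · refine Integrable.mono' (B.mono_set (Ioi_subset_Ioi one_le_e))
      ((hcont.mono (Ioi_subset_Ioi one_le_e)).aestronglyMeasurable measurableSet_Ioi) ?_
    rw [ae_restrict_iff' measurableSet_Ioi]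
    refine Filter.Eventually.of_forall fun v hv => ?_
    have hv1 : (1 : ℝ) < v := lt_of_le_of_lt one_le_e hv
    have hv0 : (0 : ℝ) < v := lt_trans one_pos hv1
    have hlog1 : 1 ≤ Real.log v := (Real.le_log_iff_exp_le hv0).2 (le_of_lt hv)
    have hlogle : Real.log v ^ (γ - 1) ≤ 1 :=
      Real.rpow_le_one_of_one_le_of_nonpos hlog1 (by linarith)
    have hnn : 0 ≤ v ^ (-(p + 1)) * Real.log v ^ (γ - 1) :=
      mul_nonneg (Real.rpow_nonneg hv0.le _) (Real.rpow_nonneg (by linarith) _)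
    rw [Real.norm_eq_abs, abs_of_nonneg (mul_nonneg hnn (hψ0 _))]
    calc v ^ (-(p + 1)) * Real.log v ^ (γ - 1) * ψ (x / v)
        ≤ v ^ (-(p + 1)) * 1 * ψ (x / v) := by
          apply mul_le_mul_of_nonneg_right _ (hψ0 _)
          exact mul_le_mul_of_nonneg_left hlogle (Real.rpow_nonneg hv0.le _)
      _ = v ^ (-(p + 1)) * ψ (x / v) := by ring

lemma intA_cx (γ p : ℝ) (hγ0 : 0 < γ) (hγ1 : γ ≤ 1) {g : ℝ → ℂ} (hgc : Continuous g)
    {x : ℝ} (hx : 0 < x)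
    (hint : IntegrableOn (fun u => u ^ (p - 1) * ‖g u‖) (Ioo 0 x)) :
    IntegrableOn
      (fun v => ((v ^ (-(p + 1)) * Real.log v ^ (γ - 1) : ℝ) : ℂ) * g (x / v)) (Ioi 1) := by
  refine Integrable.mono'
    (intA γ p hγ0 hγ1 hgc.norm (fun u => norm_nonneg _) hx hint)
    ((integrand_contOn γ (-(p + 1)) x hgc).aestronglyMeasurable measurableSet_Ioi) ?_
  rw [ae_restrict_iff' measurableSet_Ioi]
  refine Filter.Eventually.of_forall fun v hv => ?_
  have hv1 : (1 : ℝ) < v := hv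
  have hv0 : (0 : ℝ) < v := lt_trans one_pos hv1
  have hnn : 0 ≤ v ^ (-(p + 1)) * Real.log v ^ (γ - 1) :=
    mul_nonneg (Real.rpow_nonneg hv0.le _) (Real.rpow_nonneg (Real.log_nonneg hv1.le) _)
  rw [norm_mul, Complex.norm_real, Real.norm_eq_abs, abs_of_nonneg hnn]

lemma itDW_eq {g : ℝ → ℂ} (hg : ContDiff ℝ ∞ g) {s : Set ℝ} (hs : UniqueDiffOn ℝ s)
    (n : ℕ) : ∀ y ∈ s, iteratedDerivWithin n g s y = iteratedDeriv n g y := by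
  induction n with
  | zero => intro y hy; simp
  | succ n ih =>
    intro y hy
    have hdiff : Differentiable ℝ (iteratedDeriv n g) := by
      have hcd : ContDiff ℝ ∞ (iteratedDeriv n g) := by
        rw [iteratedDeriv_eq_iterate]; exact ContDiff.iterate_deriv n hg
      exact hcd.differentiable (by simp)
    rw [iteratedDerivWithin_succ, iteratedDeriv_succ,
      derivWithin_congr (fun z hz => ih z hz) (ih y hy)]
    exact DifferentiableAt.derivWithin (hdiff y) (hs y hy)

lemma itD_itD (j k : ℕ) (g : ℝ → ℂ) :
    iteratedDeriv j (iteratedDeriv k g) = iteratedDeriv (j + k) g := by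
  induction j with
  | zero => simp
  | succ j ih =>
    rw [iteratedDeriv_succ, ih, show j + 1 + k = (j + k) + 1 by omega, iteratedDeriv_succ]


lemma had_step (γ c' : ℝ) (hγ0 : 0 < γ) (hγ1 : γ ≤ 1) {g : ℝ → ℂ} (hg : ContDiff ℝ ∞ g)
    (hint : ∀ k : ℕ, ∀ a : ℝ, 0 < a →
      IntegrableOn (fun u : ℝ => u ^ (c' + k - 1) * ‖iteratedDeriv k g u‖) (Ioo 0 a))
    {x₀ : ℝ} (hx0 : 0 < x₀) :
    HasDerivAt (hadamardJV γ c' g) (hadamardJV γ (c' + 1) (deriv g) x₀) x₀ := by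
  have hgd : Differentiable ℝ g := hg.differentiable (by simp)
  have hhc : ContDiff ℝ ∞ (deriv g) := (contDiff_infty_iff_deriv.mp hg).2
  set a : ℝ := x₀ / 2 with ha_def
  set b : ℝ := x₀ + x₀ / 2 with hb_def
  have ha : 0 < a := by rw [ha_def]; positivity
  have hab : a < b := by rw [ha_def, hb_def]; linarith
  have hb : 0 < b := lt_trans ha hab
  set m : ℕ := ⌈-c'⌉₊ with hm_def
  have hmc : -c' ≤ (m : ℝ) := Nat.le_ceil _
  have hctsM : Continuous (iteratedDeriv (m + 1) (deriv g)) :=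
    hhc.continuous_iteratedDeriv (m + 1) (natCast_le_infty _)
  obtain ⟨M, hM⟩ :=
    (isCompact_Icc : IsCompact (Icc (0 : ℝ) b)).exists_bound_of_continuousOn
      hctsM.continuousOn
  have hM0 : 0 ≤ M := le_trans (norm_nonneg _) (hM 0 ⟨le_refl 0, hb.le⟩)
  have hint_h : ∀ j : ℕ, ∀ y : ℝ, 0 < y →
      IntegrableOn (fun u => u ^ ((c' + 1) + j - 1) * ‖iteratedDeriv j (deriv g) u‖)
        (Ioo 0 y) := by
    intro j y hy
    refine IntegrableOn.congr_fun (hint (j + 1) y hy) (fun u hu => ?_) measurableSet_Ioo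
    rw [iteratedDeriv_succ']
    congr 2
    push_cast
    ring
  set F : ℝ → ℝ → ℂ :=
    fun x v => ((v ^ (-(c' + 1)) * Real.log v ^ (γ - 1) : ℝ) : ℂ) * g (x / v) with hF
  set F' : ℝ → ℝ → ℂ :=
    fun x v => ((v ^ (-(c' + 1 + 1)) * Real.log v ^ (γ - 1) : ℝ) : ℂ) * deriv g (x / v)
    with hF'
  set bound : ℝ → ℝ := fun v =>
    (∑ j ∈ Finset.range (m + 1),
        ((b - a) ^ j / (j.factorial : ℝ)) *
          (v ^ (-(((c' + 1) + j) + 1)) * Real.log v ^ (γ - 1) *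
            ‖iteratedDeriv j (deriv g) (a / v)‖))
      + (M * (b - a) ^ (m + 1) / (m.factorial : ℝ)) *
          (v ^ (-(c' + m + 3)) * Real.log v ^ (γ - 1)) with hbound_def
  have hFmeas : ∀ᶠ x in nhds x₀, AEStronglyMeasurable (F x) (volume.restrict (Ioi 1)) := by
    refine Filter.Eventually.of_forall fun x => ?_
    exact ((integrand_contOn γ (-(c' + 1)) x hg.continuous).aestronglyMeasurable
      measurableSet_Ioi)
  have hFint : Integrable (F x₀) (volume.restrict (Ioi 1)) := by
    have h0 := intA_cx γ c' hγ0 hγ1 hg.continuous hx0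
      (by simpa using hint 0 x₀ hx0)
    exact h0
  have hF'meas : AEStronglyMeasurable (F' x₀) (volume.restrict (Ioi 1)) :=
    (integrand_contOn γ (-(c' + 1 + 1)) x₀ hhc.continuous).aestronglyMeasurable
      measurableSet_Ioi
  have hbi : Integrable bound (volume.restrict (Ioi 1)) := by
    rw [hbound_def]
    apply Integrable.add
    · apply integrable_finset_sum
      intro j hj
      refine Integrable.const_mul ?_ _
      exact intA γ ((c' + 1) + j) hγ0 hγ1
        ((hhc.continuous_iteratedDeriv j (natCast_le_infty _)).norm)
        (fun u => norm_nonneg _) ha (hint_h j a ha)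
    · refine Integrable.const_mul ?_ _
      exact kernel_int γ (c' + m + 3) hγ0 hγ1 (by linarith)
  have hbd : ∀ᵐ v ∂(volume.restrict (Ioi 1)),
      ∀ x ∈ Metric.ball x₀ (x₀ / 2), ‖F' x v‖ ≤ bound v := by
    filter_upwards [ae_restrict_mem measurableSet_Ioi] with v hv
    intro x hx
    have hv1 : (1 : ℝ) < v := hv
    have hv0 : (0 : ℝ) < v := lt_trans one_pos hv1
    have hlog0 : 0 ≤ Real.log v := Real.log_nonneg hv1.le
    have hdist := abs_lt.mp (by rw [← Real.dist_eq]; exact Metric.mem_ball.mp hx)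
    have hax : a ≤ x := by rw [ha_def]; linarith [hdist.1]
    have hxb : x ≤ b := by rw [hb_def]; linarith [hdist.2]
    have hsv : a / v < b / v := by gcongr
    have hmem : x / v ∈ Icc (a / v) (b / v) := ⟨by gcongr, by gcongr⟩
    have hudo : UniqueDiffOn ℝ (Icc (a / v) (b / v)) := uniqueDiffOn_Icc hsv
    have hcd : ContDiffOn ℝ (m + 1) (deriv g) (Icc (a / v) (b / v)) :=
      (hhc.of_le (natCast_add_one_le_infty m)).contDiffOn
    have hC : ∀ y ∈ Icc (a / v) (b / v),
        ‖iteratedDerivWithin (m + 1) (deriv g) (Icc (a / v) (b / v)) y‖ ≤ M := by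
      intro y hy
      rw [itDW_eq hhc hudo (m + 1) y hy]
      apply hM
      have h0av : 0 < a / v := by positivity
      have hbv : b / v ≤ b := div_le_self hb.le hv1.le
      have hy1 : a / v ≤ y := hy.1
      have hy2 : y ≤ b / v := hy.2
      exact ⟨le_trans h0av.le hy1, le_trans hy2 hbv⟩
    have htay := taylor_mean_remainder_bound hsv.le hcd hmem hC
    have havmem : a / v ∈ Icc (a / v) (b / v) := ⟨le_refl _, hsv.le⟩
    have hxav : 0 ≤ x / v - a / v := by
      have := hmem.1; linarith
    have hxbv : x / v - a / v ≤ (b - a) / v := by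
      have h1 : x / v ≤ b / v := hmem.2
      have h2 : (b - a) / v = b / v - a / v := by ring
      linarith
    have hbann : 0 ≤ (b - a) / v := le_trans hxav hxbv
    have hpoly : ‖taylorWithinEval (deriv g) m (Icc (a / v) (b / v)) (a / v) (x / v)‖ ≤
        ∑ j ∈ Finset.range (m + 1),
          ((j.factorial : ℝ))⁻¹ * ((b - a) / v) ^ j *
            ‖iteratedDeriv j (deriv g) (a / v)‖ := by
      rw [taylor_within_apply]
      refine le_trans (norm_sum_le _ _) (Finset.sum_le_sum fun j hj => ?_)
      rw [norm_smul, itDW_eq hhc hudo j _ havmem, Real.norm_eq_abs,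
        abs_of_nonneg (mul_nonneg (by positivity) (pow_nonneg hxav j))]
      have hple : (x / v - a / v) ^ j ≤ ((b - a) / v) ^ j :=
        pow_le_pow_left₀ hxav hxbv j
      have : (j.factorial : ℝ)⁻¹ * (x / v - a / v) ^ j ≤
          (j.factorial : ℝ)⁻¹ * ((b - a) / v) ^ j := by
        apply mul_le_mul_of_nonneg_left hple (by positivity)
      exact mul_le_mul_of_nonneg_right this (norm_nonneg _)
    have hnormh : ‖deriv g (x / v)‖ ≤
        (∑ j ∈ Finset.range (m + 1),
          ((j.factorial : ℝ))⁻¹ * ((b - a) / v) ^ j *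
            ‖iteratedDeriv j (deriv g) (a / v)‖)
          + M * ((b - a) / v) ^ (m + 1) / (m.factorial : ℝ) := by
      calc ‖deriv g (x / v)‖
          ≤ ‖taylorWithinEval (deriv g) m (Icc (a / v) (b / v)) (a / v) (x / v)‖ +
            ‖deriv g (x / v) -
              taylorWithinEval (deriv g) m (Icc (a / v) (b / v)) (a / v) (x / v)‖ :=
            norm_le_insert' _ _
        _ ≤ _ := by
            apply add_le_add hpoly
            refine le_trans htay ?_
            gcongr
    have hK1nn : 0 ≤ v ^ (-(c' + 1 + 1)) * Real.log v ^ (γ - 1) :=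
      mul_nonneg (Real.rpow_nonneg hv0.le _) (Real.rpow_nonneg hlog0 _)
    have hFnorm : ‖F' x v‖ = v ^ (-(c' + 1 + 1)) * Real.log v ^ (γ - 1) * ‖deriv g (x / v)‖ := by
      rw [hF']
      rw [norm_mul, Complex.norm_real, Real.norm_eq_abs, abs_of_nonneg hK1nn]
    rw [hFnorm]
    calc v ^ (-(c' + 1 + 1)) * Real.log v ^ (γ - 1) * ‖deriv g (x / v)‖
        ≤ v ^ (-(c' + 1 + 1)) * Real.log v ^ (γ - 1) *
          ((∑ j ∈ Finset.range (m + 1),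
            ((j.factorial : ℝ))⁻¹ * ((b - a) / v) ^ j *
              ‖iteratedDeriv j (deriv g) (a / v)‖)
            + M * ((b - a) / v) ^ (m + 1) / (m.factorial : ℝ)) :=
          mul_le_mul_of_nonneg_left hnormh hK1nn
      _ = bound v := by
          rw [hbound_def]
          rw [mul_add, Finset.mul_sum]
          congr 1
          · refine Finset.sum_congr rfl fun j hj => ?_
            have hvpow : v ^ (-(((c' + 1) + (j : ℝ)) + 1)) =
                v ^ (-(c' + 1 + 1)) * ((v : ℝ) ^ (j : ℕ))⁻¹ := by
              rw [← Real.rpow_natCast v j, ← Real.rpow_neg hv0.le, ← Real.rpow_add hv0]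
              ring_nf
            have hfac : ((j.factorial : ℝ)) ≠ 0 := by positivity
            have hvne : ((v : ℝ) ^ (j : ℕ)) ≠ 0 := by positivity
            rw [hvpow, div_pow]
            field_simp
          · have hvpow : v ^ (-(c' + (m : ℝ) + 3)) =
                v ^ (-(c' + 1 + 1)) * ((v : ℝ) ^ (m + 1 : ℕ))⁻¹ := by
              rw [← Real.rpow_natCast v (m + 1), ← Real.rpow_neg hv0.le,
                ← Real.rpow_add hv0]
              push_cast
              ring_nf
            have hfac : ((m.factorial : ℝ)) ≠ 0 := by positivity
            have hvne : ((v : ℝ) ^ (m + 1 : ℕ)) ≠ 0 := by positivity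
            rw [hvpow, div_pow]
            field_simp
  have hdiff : ∀ᵐ v ∂(volume.restrict (Ioi 1)),
      ∀ x ∈ Metric.ball x₀ (x₀ / 2), HasDerivAt (fun y => F y v) (F' x v) x := by
    filter_upwards [ae_restrict_mem measurableSet_Ioi] with v hv
    intro x _
    have hv1 : (1 : ℝ) < v := hv
    have hv0 : (0 : ℝ) < v := lt_trans one_pos hv1
    have h1 : HasDerivAt (fun y : ℝ => y / v) (1 / v) x := (hasDerivAt_id x).div_const v
    have h2 : HasDerivAt (fun y : ℝ => g (y / v)) ((1 / v) • deriv g (x / v)) x :=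
      HasDerivAt.scomp x (hgd (x / v)).hasDerivAt h1
    have h3 := h2.const_mul (((v ^ (-(c' + 1)) * Real.log v ^ (γ - 1) : ℝ) : ℂ))
    have hkey : ((v ^ (-(c' + 1)) * Real.log v ^ (γ - 1) : ℝ) : ℂ) *
        ((1 / v) • deriv g (x / v)) = F' x v := by
      rw [hF']
      rw [Complex.real_smul, ← mul_assoc, ← Complex.ofReal_mul]
      congr 2
      have hvv : v ^ (-(c' + 1 + 1)) = v ^ (-(c' + 1)) * v ^ (-1 : ℝ) := by
        rw [← Real.rpow_add hv0]; ring_nf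
      rw [hvv, Real.rpow_neg_one]
      ring
    rw [← hkey]
    exact h3
  have main := hasDerivAt_integral_of_dominated_loc_of_deriv_le
    (Metric.ball_mem_nhds x₀ (show (0 : ℝ) < x₀ / 2 by positivity)) hFmeas hFint hF'meas hbd hbi hdiff
  have hfinal := (main.2).const_mul (((1 / Real.Gamma γ : ℝ) : ℂ))
  have hEq1 : (fun x => ((1 / Real.Gamma γ : ℝ) : ℂ) * ∫ v in Ioi (1 : ℝ), F x v) =
      hadamardJV γ c' g := by
    funext y
    rw [hadamardJV, hF]
  have hEq2 : ((1 / Real.Gamma γ : ℝ) : ℂ) * ∫ v in Ioi (1 : ℝ), F' x₀ v =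
      hadamardJV γ (c' + 1) (deriv g) x₀ := by
    rw [hadamardJV, hF']
  rw [← hEq1, ← hEq2]
  exact hfinal

end HadamardAux

/-- Differentiation under the Hadamard-type integral:
(J^γ_{0+,c} f)'(x) = (J^γ_{0+,c+1} f')(x), and
(J^γ_{0+,c} f)^{(k)}(x) = (J^γ_{0+,c+k} f^{(k)})(x) for all k ∈ ℕ. -/
theorem stmt18 (γ c : ℝ) (hγ0 : 0 < γ) (hγ1 : γ ≤ 1) (f : ℝ → ℂ)
    (hf : ContDiff ℝ (⊤ : ℕ∞) f)
    (hint : ∀ k : ℕ, ∀ a : ℝ, 0 < a →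
      IntegrableOn
        (fun u : ℝ => u ^ (c + k - 1) * ‖iteratedDeriv k f u‖)
        (Set.Ioo 0 a)) :
    ∀ x : ℝ, 0 < x →
      deriv (hadamardJV γ c f) x = hadamardJV γ (c + 1) (deriv f) x ∧
      ∀ k : ℕ,
        iteratedDeriv k (hadamardJV γ c f) x
          = hadamardJV γ (c + k) (iteratedDeriv k f) x := by
  have hf' : ContDiff ℝ ∞ f := hf.of_le (by simp)
  have hint' : ∀ k : ℕ, ∀ a : ℝ, 0 < a →
      IntegrableOn (fun u : ℝ => u ^ (c + k - 1) * ‖iteratedDeriv k f u‖) (Ioo 0 a) := by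
    intro k a ha
    simpa using hint k a ha
  have main : ∀ k : ℕ, ∀ y : ℝ, 0 < y →
      iteratedDeriv k (hadamardJV γ c f) y = hadamardJV γ (c + k) (iteratedDeriv k f) y := by
    intro k
    induction k with
    | zero => intro y hy; simp
    | succ k ih =>
      intro y hy
      have hgk : ContDiff ℝ ∞ (iteratedDeriv k f) := by
        rw [iteratedDeriv_eq_iterate]
        exact ContDiff.iterate_deriv k hf'
      have hintk : ∀ j : ℕ, ∀ a : ℝ, 0 < a →
          IntegrableOn
            (fun u => u ^ ((c + k) + j - 1) * ‖iteratedDeriv j (iteratedDeriv k f) u‖)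
            (Ioo 0 a) := by
        intro j a ha
        refine IntegrableOn.congr_fun (hint' (j + k) a ha) (fun u hu => ?_) measurableSet_Ioo
        rw [HadamardAux.itD_itD]
        congr 2
        push_cast
        ring
      have hstep := HadamardAux.had_step γ (c + k) hγ0 hγ1 hgk hintk hy
      rw [iteratedDeriv_succ]
      have hev : iteratedDeriv k (hadamardJV γ c f) =ᶠ[nhds y]
          hadamardJV γ (c + k) (iteratedDeriv k f) :=
        Filter.eventually_of_mem (Ioi_mem_nhds hy) fun z hz => ih z hz
      rw [hev.deriv_eq, hstep.deriv, ← iteratedDeriv_succ]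
      have hc : c + (k : ℝ) + 1 = c + ((k + 1 : ℕ) : ℝ) := by push_cast; ring
      rw [hc]
  intro x hx
  refine ⟨?_, fun k => main k x hx⟩
  have hstep := HadamardAux.had_step γ c hγ0 hγ1 hf' hint' hx
  exact hstep.deriv
end
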